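/- arXiv:2502.08286 — 5 statements merged into one kernel-verified Lean document; each statement's English description precedes it below -/
import Mathlib

section
/- Assume X and Y are nonempty and bounded, and let h ∈ ℝ. Then the system {−Aᵀu ≤ C y + g, a·u ≤ e·y − h, u ≥ 0} has a solution u ∈ ℝ^q for every y ∈ ℝ^m satisfying B y ≤ b, y ≥ 0, if and only if the system {−Bᵀv ≤ Cᵀx + e, b·v ≤ g·x − h, v ≥ 0} has a solution v ∈ ℝ^l for every x ∈ ℝ^n satisfying A x ≤ a, x ≥ 0. -/
/-!
Fix `x ∈ X`. If every `y ∈ Y` admits a solution `u`, then pairing the constraints of `u` with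
`x ≥ 0` and `A x ≤ a` (weak duality) shows that the linear function `y ↦ -(Cᵀ x + e) ⬝ y` is
bounded by `g ⬝ x - h` on the nonempty polyhedron `Y`. By LP duality this bound has a dual
certificate, which is exactly a solution `v` of the second system. The converse is the same
argument with the roles of the two systems exchanged (`C ↔ Cᵀ`).

LP duality is derived from Farkas' lemma, i.e. hyperplane separation from the cone spanned by the
rows of the constraint matrix; that this cone is closed follows from the conic Carathéodory
theorem, which writes it as a finite union of images of orthants under injective linear maps.
-/

open Finset Matrix

section Caratheodory

variable {𝕜 E ι : Type*} [Field 𝕜] [LinearOrder 𝕜] [IsStrictOrderedRing 𝕜]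
  [AddCommGroup E] [Module 𝕜 E] {G : ι → E}

theorem exists_erase_nonneg_combination_of_relation [DecidableEq ι] {s : Finset ι}
    {μ d : ι → 𝕜} (hμ : ∀ i ∈ s, 0 ≤ μ i) (hd : ∑ i ∈ s, d i • G i = 0)
    (hpos : ∃ i ∈ s, 0 < d i) :
    ∃ i₀ ∈ s, ∃ ν : ι → 𝕜, (∀ i ∈ s.erase i₀, 0 ≤ ν i) ∧
      ∑ i ∈ s, μ i • G i = ∑ i ∈ s.erase i₀, ν i • G i := by
  set T := s.filter (0 < d ·)
  have hT : T.Nonempty := by simpa [T, Finset.Nonempty] using hpos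
  -- `ν = μ - r d` with `r` the largest step keeping all coefficients nonnegative
  obtain ⟨i₀, hi₀T, hr⟩ := T.exists_mem_eq_inf' hT (fun i => μ i / d i)
  set r := T.inf' hT (fun i => μ i / d i)
  obtain ⟨hi₀s, hdi₀⟩ := Finset.mem_filter.mp hi₀T
  have hr₀ : 0 ≤ r := hr ▸ div_nonneg (hμ i₀ hi₀s) hdi₀.le
  have hν : ∀ i ∈ s, 0 ≤ μ i - r * d i := by
    intro i hi
    rcases lt_or_ge 0 (d i) with hdi | hdi
    · have : r ≤ μ i / d i := T.inf'_le _ (Finset.mem_filter.mpr ⟨hi, hdi⟩)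
      rw [le_div_iff₀ hdi] at this
      linarith
    · nlinarith [hμ i hi]
  have hνi₀ : (μ i₀ - r * d i₀) • G i₀ = 0 := by
    rw [hr, div_mul_cancel₀ _ hdi₀.ne', sub_self, zero_smul]
  refine ⟨i₀, hi₀s, fun i => μ i - r * d i, fun i hi => hν i (Finset.mem_of_mem_erase hi), ?_⟩
  rw [Finset.sum_erase s (f := fun i => (μ i - r * d i) • G i) hνi₀]
  simp only [sub_smul, mul_smul, Finset.sum_sub_distrib, ← Finset.smul_sum, hd, smul_zero,
    sub_zero]

theorem exists_linearIndepOn_nonneg_combination (s : Finset ι) (μ : ι → 𝕜)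
    (hμ : ∀ i ∈ s, 0 ≤ μ i) :
    ∃ t ⊆ s, LinearIndepOn 𝕜 G (t : Set ι) ∧ ∃ ν : ι → 𝕜, (∀ i ∈ t, 0 ≤ ν i) ∧
      ∑ i ∈ s, μ i • G i = ∑ i ∈ t, ν i • G i := by
  classical
  induction s using Finset.strongInduction generalizing μ with
  | H s ih =>
  by_cases hs : LinearIndepOn 𝕜 G (s : Set ι)
  · exact ⟨s, subset_rfl, hs, μ, hμ, rfl⟩
  obtain ⟨d, hd, i, his, hdi⟩ := not_linearIndepOn_finset_iff.mp hs
  obtain ⟨i₀, hi₀, ν, hν, hsum⟩ : ∃ i₀ ∈ s, ∃ ν : ι → 𝕜, (∀ i ∈ s.erase i₀, 0 ≤ ν i) ∧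
      ∑ i ∈ s, μ i • G i = ∑ i ∈ s.erase i₀, ν i • G i := by
    rcases hdi.lt_or_gt with hneg | hpos
    · refine exists_erase_nonneg_combination_of_relation (d := -d) hμ ?_ ⟨i, his, by simpa⟩
      simp [neg_smul, hd]
    · exact exists_erase_nonneg_combination_of_relation hμ hd ⟨i, his, hpos⟩
  obtain ⟨t, hts, ht, ν', hν', hsum'⟩ := ih _ (Finset.erase_ssubset hi₀) ν hν
  exact ⟨t, hts.trans (Finset.erase_subset _ _), ht, ν', hν', hsum.trans hsum'⟩

end Caratheodory

namespace PointedCone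

variable {E ι : Type*} [AddCommGroup E] [Module ℝ E]

theorem mem_hull_range_iff [Fintype ι] {G : ι → E} {x : E} :
    x ∈ hull ℝ (Set.range G) ↔ ∃ μ : ι → ℝ, 0 ≤ μ ∧ ∑ i, μ i • G i = x := by
  rw [Submodule.mem_span_range_iff_exists_fun]
  constructor
  · rintro ⟨c, rfl⟩
    exact ⟨fun i => c i, fun i => (c i).2, rfl⟩
  · rintro ⟨μ, hμ, rfl⟩
    exact ⟨fun i => ⟨μ i, hμ i⟩, rfl⟩

variable [TopologicalSpace E] [IsTopologicalAddGroup E] [ContinuousSMul ℝ E] [T2Space E]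

theorem isClosed_hull_range_of_linearIndependent [Fintype ι] {G : ι → E}
    (hG : LinearIndependent ℝ G) : IsClosed (hull ℝ (Set.range G) : Set E) := by
  have hL := LinearMap.isClosedEmbedding_of_injective
    (LinearMap.ker_eq_bot.mpr (linearIndependent_iff_injective_fintypeLinearCombination.mp hG))
  convert hL.isClosedMap _ (isClosed_Ici (a := (0 : ι → ℝ)))
  ext x
  simp [mem_hull_range_iff, Fintype.linearCombination_apply]

theorem isClosed_hull_range [Fintype ι] (G : ι → E) :
    IsClosed (hull ℝ (Set.range G) : Set E) := by
  suffices h : (hull ℝ (Set.range G) : Set E) =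
      ⋃ (t : Finset ι) (_ : LinearIndepOn ℝ G (t : Set ι)),
        hull ℝ (Set.range fun i : t => G i) by
    rw [h]
    exact isClosed_iUnion_of_finite fun t => isClosed_iUnion_of_finite fun ht =>
      isClosed_hull_range_of_linearIndependent ht
  apply subset_antisymm
  · rintro x hx
    obtain ⟨μ, hμ, rfl⟩ := mem_hull_range_iff.mp hx
    obtain ⟨t, -, ht, ν, hν, hsum⟩ :=
      exists_linearIndepOn_nonneg_combination (G := G) univ μ fun i _ => hμ i
    refine Set.mem_iUnion₂.mpr
      ⟨t, ht, mem_hull_range_iff.mpr ⟨fun i => ν i, fun i => hν i i.2, ?_⟩⟩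
    rw [hsum, ← Finset.sum_coe_sort t]
  · exact Set.iUnion₂_subset fun t _ =>
      Submodule.span_mono (Set.range_comp_subset_range Subtype.val G)

end PointedCone

theorem LinearMap.apply_eq_dotProduct {R κ : Type*} [CommSemiring R] [Fintype κ] [DecidableEq κ]
    (f : (κ → R) →ₗ[R] R) (x : κ → R) : f x = x ⬝ᵥ fun j => f (Pi.single j 1) := by
  conv_lhs => rw [pi_eq_sum_univ' x]
  simp [dotProduct]

namespace Matrix

variable {ι κ : Type*} [Fintype κ]

theorem exists_nonneg_le_vecMul [Fintype ι] {M : Matrix ι κ ℝ} {w : κ → ℝ}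
    (h : ∀ z, 0 ≤ z → M *ᵥ z ≤ 0 → w ⬝ᵥ z ≤ 0) : ∃ v, 0 ≤ v ∧ w ≤ v ᵥ* M := by
  classical
  -- `w ≤ v ᵥ* M` for some `v ≥ 0` iff `w` is in the cone spanned by the rows of `M` and the `-eⱼ`
  let G : ι ⊕ κ → κ → ℝ := Sum.elim (fun i => M i) fun j => -Pi.single j 1
  let K : ProperCone ℝ (κ → ℝ) :=
    ⟨PointedCone.hull ℝ (Set.range G), PointedCone.isClosed_hull_range G⟩
  have hK : ∀ μ : ι ⊕ κ → ℝ, ∑ i, μ i • G i = (μ ∘ Sum.inl) ᵥ* M - μ ∘ Sum.inr := by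
    intro μ
    ext j
    simp [G, Fintype.sum_sum_type, vecMul_eq_sum, sub_eq_add_neg, Pi.single_apply]
  by_cases hw : w ∈ K
  · obtain ⟨μ, hμ, hμw⟩ := PointedCone.mem_hull_range_iff.mp hw
    refine ⟨μ ∘ Sum.inl, fun i => hμ _, fun j => ?_⟩
    have hwj : w j = ((μ ∘ Sum.inl) ᵥ* M) j - μ (Sum.inr j) :=
      congrFun (hμw.symm.trans (hK μ)) j
    have hμj : 0 ≤ μ (Sum.inr j) := hμ _
    linarith
  obtain ⟨f, hfK, hfw⟩ := K.hyperplane_separation_point hw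
  set z : κ → ℝ := -fun j => f (Pi.single j 1)
  have hf : ∀ x, f x = -(x ⬝ᵥ z) := fun x => by
    simpa [z] using (f : (κ → ℝ) →ₗ[ℝ] ℝ).apply_eq_dotProduct x
  have hG : ∀ i, 0 ≤ f (G i) := fun i => hfK _ (PointedCone.subset_hull ⟨i, rfl⟩)
  have hz : 0 ≤ z := fun j => by simpa [G, z] using hG (Sum.inr j)
  have hMz : M *ᵥ z ≤ 0 := fun i => by simpa [hf, G, mulVec] using hG (Sum.inl i)
  have := h z hz hMz
  rw [hf] at hfw
  linarith

variable {B : Matrix ι κ ℝ} {b : ι → ℝ} {c : κ → ℝ} {t : ℝ}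

theorem dotProduct_le_mul_of_mulVec_le_smul (hfeas : ∃ y, B *ᵥ y ≤ b ∧ 0 ≤ y)
    (hc : ∀ y, B *ᵥ y ≤ b → 0 ≤ y → c ⬝ᵥ y ≤ t) {y : κ → ℝ} {s : ℝ} (hy : 0 ≤ y) (hs : 0 ≤ s)
    (hBy : B *ᵥ y ≤ s • b) : c ⬝ᵥ y ≤ s * t := by
  rcases hs.lt_or_eq with hs | rfl
  · have := hc (s⁻¹ • y) (by
        rw [mulVec_smul]
        exact fun i => by simpa [inv_mul_le_iff₀ hs] using hBy i)
      (smul_nonneg (inv_nonneg.mpr hs.le) hy)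
    rwa [dotProduct_smul, smul_eq_mul, inv_mul_le_iff₀ hs] at this
  -- `y` is a recession direction, along which `c ⬝ᵥ ·` stays bounded by `t`
  obtain ⟨y₀, hBy₀, hy₀⟩ := hfeas
  rw [zero_mul]
  by_contra! hpos
  have hk : ∀ k : ℝ, 0 ≤ k → c ⬝ᵥ y₀ + k * c ⬝ᵥ y ≤ t := fun k hk => by
    have := hc (y₀ + k • y) (fun i => by
        have := hBy i
        simp only [zero_smul, Pi.zero_apply] at this
        simp only [mulVec_add, mulVec_smul, Pi.add_apply, Pi.smul_apply, smul_eq_mul]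
        nlinarith [hBy₀ i])
      (add_nonneg hy₀ (smul_nonneg hk hy))
    simpa [dotProduct_add, dotProduct_smul] using this
  have := hk ((t - c ⬝ᵥ y₀ + 1) / c ⬝ᵥ y) (div_nonneg (by linarith [hk 0 le_rfl]) hpos.le)
  rw [div_mul_cancel₀ _ hpos.ne'] at this
  linarith

theorem exists_nonneg_dual_of_forall_dotProduct_le [Fintype ι]
    (hfeas : ∃ y, B *ᵥ y ≤ b ∧ 0 ≤ y) (hc : ∀ y, B *ᵥ y ≤ b → 0 ≤ y → c ⬝ᵥ y ≤ t) :
    ∃ v, 0 ≤ v ∧ c ≤ Bᵀ *ᵥ v ∧ b ⬝ᵥ v ≤ t := by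
  -- Farkas' lemma for the homogenized system `B y ≤ s b`, `c ⬝ y > s t`
  obtain ⟨v, hv, hle⟩ := exists_nonneg_le_vecMul (M := fromCols B (replicateCol Unit (-b)))
    (w := Sum.elim c fun _ => -t) <| by
    intro z hz hMz
    obtain ⟨y, s, rfl⟩ : ∃ y s, z = Sum.elim y fun _ => s :=
      ⟨z ∘ Sum.inl, z (Sum.inr ()), by ext (_ | _) <;> rfl⟩
    have hBy : B *ᵥ y ≤ s • b := fun i => by
      simpa [mulVec, dotProduct, mul_comm] using hMz i
    have := dotProduct_le_mul_of_mulVec_le_smul hfeas hc (y := y) (s := s)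
      (fun j => hz (Sum.inl j)) (hz (Sum.inr ())) hBy
    simp [sumElim_dotProduct_sumElim]
    linarith
  refine ⟨v, hv, fun j => by simpa [mulVec_transpose] using hle (Sum.inl j), ?_⟩
  simpa [vecMul, dotProduct, mul_comm] using hle (Sum.inr ())

end Matrix

section ParametricSystems

variable {ι κ α β : Type*} [Fintype ι] [Fintype κ] [Fintype α] [Fintype β]
  {A : Matrix α ι ℝ} {B : Matrix β κ ℝ} {C : Matrix ι κ ℝ}
  {a : α → ℝ} {b : β → ℝ} {g : ι → ℝ} {e : κ → ℝ} {h : ℝ}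

theorem neg_mulVec_transpose_add_dotProduct_le {x : ι → ℝ} {y : κ → ℝ} {u : α → ℝ}
    (hx : 0 ≤ x) (hAx : A *ᵥ x ≤ a) (hu : 0 ≤ u) (hu₁ : -(Aᵀ *ᵥ u) ≤ C *ᵥ y + g)
    (hu₂ : a ⬝ᵥ u ≤ e ⬝ᵥ y - h) : -(Cᵀ *ᵥ x + e) ⬝ᵥ y ≤ g ⬝ᵥ x - h := by
  have h₁ : x ⬝ᵥ -(Aᵀ *ᵥ u) ≤ x ⬝ᵥ (C *ᵥ y + g) :=
    dotProduct_le_dotProduct_of_nonneg_left hu₁ hx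
  have h₂ : (A *ᵥ x) ⬝ᵥ u ≤ a ⬝ᵥ u := dotProduct_le_dotProduct_of_nonneg_right hAx hu
  rw [dotProduct_neg, dotProduct_mulVec, vecMul_transpose, dotProduct_add,
    dotProduct_mulVec] at h₁
  rw [neg_dotProduct, add_dotProduct, mulVec_transpose, dotProduct_comm g]
  linarith

theorem forall_exists_dual_solution (hY : ∃ y, B *ᵥ y ≤ b ∧ 0 ≤ y)
    (H : ∀ y, B *ᵥ y ≤ b → 0 ≤ y →
      ∃ u, -(Aᵀ *ᵥ u) ≤ C *ᵥ y + g ∧ a ⬝ᵥ u ≤ e ⬝ᵥ y - h ∧ 0 ≤ u)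
    (x : ι → ℝ) (hAx : A *ᵥ x ≤ a) (hx : 0 ≤ x) :
    ∃ v, -(Bᵀ *ᵥ v) ≤ Cᵀ *ᵥ x + e ∧ b ⬝ᵥ v ≤ g ⬝ᵥ x - h ∧ 0 ≤ v := by
  obtain ⟨v, hv, hcv, hbv⟩ := exists_nonneg_dual_of_forall_dotProduct_le hY fun y hBy hy => by
    obtain ⟨u, hu₁, hu₂, hu⟩ := H y hBy hy
    exact neg_mulVec_transpose_add_dotProduct_le hx hAx hu hu₁ hu₂
  exact ⟨v, neg_le.mp hcv, hbv, hv⟩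

end ParametricSystems

theorem stmt_11_general
    (n m q l : ℕ)
    (C : Matrix (Fin n) (Fin m) ℝ) (A : Matrix (Fin q) (Fin n) ℝ)
    (B : Matrix (Fin l) (Fin m) ℝ)
    (a : Fin q → ℝ) (b : Fin l → ℝ) (g : Fin n → ℝ) (e : Fin m → ℝ)
    (X : Set (Fin n → ℝ)) (Y : Set (Fin m → ℝ))
    (hX : X = {x | A.mulVec x ≤ a ∧ 0 ≤ x})
    (hY : Y = {y | B.mulVec y ≤ b ∧ 0 ≤ y})
    (hXne : X.Nonempty) (hYne : Y.Nonempty)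
    (h : ℝ) :
    (∀ y : Fin m → ℝ, B.mulVec y ≤ b → 0 ≤ y →
      ∃ u : Fin q → ℝ,
        -(Aᵀ.mulVec u) ≤ C.mulVec y + g ∧ a ⬝ᵥ u ≤ e ⬝ᵥ y - h ∧ 0 ≤ u) ↔
    (∀ x : Fin n → ℝ, A.mulVec x ≤ a → 0 ≤ x →
      ∃ v : Fin l → ℝ,
        -(Bᵀ.mulVec v) ≤ Cᵀ.mulVec x + e ∧ b ⬝ᵥ v ≤ g ⬝ᵥ x - h ∧ 0 ≤ v) := by
  subst hX hY
  refine ⟨forall_exists_dual_solution hYne, fun H y hBy hy => ?_⟩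
  simpa only [transpose_transpose] using
    forall_exists_dual_solution (C := Cᵀ) (g := e) (e := g) hXne H y hBy hy

/-- Duality principle for the parametric linear systems (Theorem 4 of the
paper). -/
theorem stmt_11
    (n m q l : ℕ) (hn : 0 < n) (hm : 0 < m) (hq : 0 < q) (hl : 0 < l)
    (C : Matrix (Fin n) (Fin m) ℝ) (A : Matrix (Fin q) (Fin n) ℝ)
    (B : Matrix (Fin l) (Fin m) ℝ)
    (a : Fin q → ℝ) (b : Fin l → ℝ) (g : Fin n → ℝ) (e : Fin m → ℝ)
    (X : Set (Fin n → ℝ)) (Y : Set (Fin m → ℝ))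
    (hX : X = {x | A.mulVec x ≤ a ∧ 0 ≤ x})
    (hY : Y = {y | B.mulVec y ≤ b ∧ 0 ≤ y})
    (hXne : X.Nonempty) (hYne : Y.Nonempty)
    (hXbd : Bornology.IsBounded X) (hYbd : Bornology.IsBounded Y)
    (h : ℝ) :
    (∀ y : Fin m → ℝ, B.mulVec y ≤ b → 0 ≤ y →
      ∃ u : Fin q → ℝ,
        -(Aᵀ.mulVec u) ≤ C.mulVec y + g ∧ a ⬝ᵥ u ≤ e ⬝ᵥ y - h ∧ 0 ≤ u) ↔
    (∀ x : Fin n → ℝ, A.mulVec x ≤ a → 0 ≤ x →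
      ∃ v : Fin l → ℝ,
        -(Bᵀ.mulVec v) ≤ Cᵀ.mulVec x + e ∧ b ⬝ᵥ v ≤ g ⬝ᵥ x - h ∧ 0 ≤ v) :=
  stmt_11_general n m q l C A B a b g e X Y hX hY hXne hYne h
end

section
/- Suppose the system D y ≤ d is inconsistent (has no solution y ∈ ℝ^m). Then the inequality s·y ≤ s₀ is redundant for the inconsistent system D y ≤ d if and only if there exist v ∈ ℝ^p with v ≥ 0 and v₀ ≥ 0 such that Dᵀv = s, d·v + v₀ = s₀, and the set of rows {Dᵢ : vᵢ > 0} of D is linearly independent. Moreover, in that case the subsystem of D y ≤ d consisting of the inequalities with indices i such that vᵢ > 0 is consistent. -/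
/-!
If a consistent subsystem `I` makes `s ⬝ᵥ y ≤ s₀` redundant, the affine Farkas lemma writes `s` as
a nonnegative combination of the rows in `I` whose combination of the right-hand sides is at most
`s₀`. Consistency of `I` forbids nonnegative dependencies among its rows with negative cost, so
Carathéodory's elimination, moving along a dependency of nonnegative cost, shrinks the support
until its rows are linearly independent, without increasing the cost. Conversely, rows that are
linearly independent can be matched with equality by some `y`, so the positive part of a
certificate is consistent, and weak duality makes the inequality redundant for it.
-/

open Matrix Function

section Caratheodory

variable {ι E : Type*} [Fintype ι] [AddCommGroup E] [Module ℝ E]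

lemma exists_sub_smul_nonneg_support_ssubset {u c : ι → ℝ} (hu : 0 ≤ u)
    (hc : support c ⊆ support u) (hpos : ∃ i, 0 < c i) :
    ∃ t : ℝ, 0 ≤ t ∧ 0 ≤ u - t • c ∧ support (u - t • c) ⊂ support u := by
  classical
  obtain ⟨i₀, hi₀, hmin⟩ := Finset.exists_min_image (Finset.univ.filter fun i => 0 < c i)
    (fun i => u i / c i) (by obtain ⟨j, hj⟩ := hpos; exact ⟨j, by simpa using hj⟩)
  rw [Finset.mem_filter] at hi₀
  have ht : 0 ≤ u i₀ / c i₀ := div_nonneg (hu i₀) hi₀.2.le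
  refine ⟨u i₀ / c i₀, ht, fun i => ?_, ?_⟩
  · have hui : 0 ≤ u i := hu i
    simp only [Pi.zero_apply, Pi.sub_apply, Pi.smul_apply, smul_eq_mul]
    rcases le_or_gt (c i) 0 with hci | hci
    · linarith [mul_nonpos_of_nonneg_of_nonpos ht hci]
    · have := hmin i (by simp [hci])
      rw [div_le_div_iff₀ hi₀.2 hci] at this
      rw [div_mul_eq_mul_div, sub_nonneg, div_le_iff₀ hi₀.2]
      linarith
  · refine (Set.ssubset_iff_of_subset fun i hi => ?_).2 ⟨i₀, hc hi₀.2.ne', by simp [hi₀.2.ne']⟩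
    by_contra hui
    have hci : c i = 0 := by_contra fun h => hui (hc h)
    simp_all

lemma exists_ne_zero_sum_smul_eq_zero_of_not_linearIndepOn {w : ι → E} {s : Set ι}
    (h : ¬ LinearIndepOn ℝ w s) :
    ∃ c : ι → ℝ, support c ⊆ s ∧ ∑ i, c i • w i = 0 ∧ c ≠ 0 := by
  simp only [linearIndepOn_iff, not_forall] at h
  obtain ⟨l, hl, hlw, hl0⟩ := h
  refine ⟨l, by simpa [Finsupp.mem_supported, Finsupp.fun_support_eq] using hl, ?_,
    fun h => hl0 (Finsupp.ext (congrFun h))⟩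
  rwa [Finsupp.linearCombination_apply, Finsupp.sum_fintype _ _ (by simp)] at hlw

variable (w : ι → E) (δ : ι → ℝ)

lemma exists_cost_nonneg_dependency_of_not_linearIndepOn
    (H : ∀ c : ι → ℝ, 0 ≤ c → ∑ i, c i • w i = 0 → 0 ≤ ∑ i, c i * δ i) {s : Set ι}
    (h : ¬ LinearIndepOn ℝ w s) :
    ∃ c : ι → ℝ, support c ⊆ s ∧ ∑ i, c i • w i = 0 ∧ 0 ≤ ∑ i, c i * δ i ∧ ∃ i, 0 < c i := by
  obtain ⟨c, hcs, hcw, hc0⟩ := exists_ne_zero_sum_smul_eq_zero_of_not_linearIndepOn h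
  wlog hcδ : 0 ≤ ∑ i, c i * δ i generalizing c
  · refine this (-c) (by simpa using hcs) (by simp [hcw]) (neg_ne_zero.2 hc0) ?_
    simp only [Pi.neg_apply, neg_mul, Finset.sum_neg_distrib]
    linarith
  by_cases hpos : ∃ i, 0 < c i
  · exact ⟨c, hcs, hcw, hcδ, hpos⟩
  -- `c ≤ 0`, so `-c` is a nonnegative dependency, whose cost `H` controls.
  simp only [not_exists, not_lt] at hpos
  have hnc : 0 ≤ -c := fun i => by simpa using hpos i
  obtain ⟨i, hi⟩ := Function.ne_iff.1 hc0
  refine ⟨-c, by simpa using hcs, by simp [hcw], H _ hnc (by simp [hcw]), i, ?_⟩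
  simpa using (hpos i).lt_of_ne hi

theorem exists_nonneg_linearIndepOn_support
    (H : ∀ c : ι → ℝ, 0 ≤ c → ∑ i, c i • w i = 0 → 0 ≤ ∑ i, c i * δ i)
    (u : ι → ℝ) (hu : 0 ≤ u) :
    ∃ u' : ι → ℝ, 0 ≤ u' ∧ support u' ⊆ support u ∧ ∑ i, u' i • w i = ∑ i, u i • w i ∧
      ∑ i, u' i * δ i ≤ ∑ i, u i * δ i ∧ LinearIndepOn ℝ w (support u') := by
  induction hn : (support u).ncard using Nat.strong_induction_on generalizing u with
  | _ n ih =>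
  by_cases hind : LinearIndepOn ℝ w (support u)
  · exact ⟨u, hu, subset_rfl, rfl, le_rfl, hind⟩
  obtain ⟨c, hcu, hcw, hcδ, hpos⟩ := exists_cost_nonneg_dependency_of_not_linearIndepOn w δ H hind
  obtain ⟨t, ht, hnn, hss⟩ := exists_sub_smul_nonneg_support_ssubset hu hcu hpos
  obtain ⟨u', hu', hsub, hw, hδ, hli⟩ :=
    ih _ (hn ▸ Set.ncard_lt_ncard hss (Set.toFinite _)) (u - t • c) hnn rfl
  refine ⟨u', hu', hsub.trans hss.subset, ?_, ?_, hli⟩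
  · simp [hw, sub_smul, Finset.sum_sub_distrib, mul_smul, ← Finset.smul_sum, hcw]
  · calc ∑ i, u' i * δ i ≤ ∑ i, (u - t • c) i * δ i := hδ
      _ = ∑ i, u i * δ i - t * ∑ i, c i * δ i := by
        simp [sub_mul, Finset.sum_sub_distrib, mul_assoc, Finset.mul_sum]
      _ ≤ ∑ i, u i * δ i := sub_le_self _ (mul_nonneg ht hcδ)

end Caratheodory

section Farkas

variable {ι E : Type*} [Fintype ι] [AddCommGroup E] [Module ℝ E] [TopologicalSpace E]
  [IsTopologicalAddGroup E] [ContinuousSMul ℝ E] [T2Space E]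

theorem isClosed_image_linearCombination_nonneg (w : ι → E) :
    IsClosed (Fintype.linearCombination ℝ w '' Set.Ici 0) := by
  classical
  -- By Carathéodory, the cone is the union, over the finitely many linearly independent
  -- subfamilies, of the images of closed orthants under injective linear maps.
  have hunion : Fintype.linearCombination ℝ w '' Set.Ici 0 =
      ⋃ S ∈ {S : Set ι | LinearIndepOn ℝ w S},
        Fintype.linearCombination ℝ (fun i : S => w i) '' Set.Ici 0 := by
    ext x
    simp only [Set.mem_image, Set.mem_Ici, Set.mem_iUnion, Set.mem_ofPred_eq, exists_prop,
      Fintype.linearCombination_apply]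
    constructor
    · rintro ⟨u, hu, rfl⟩
      obtain ⟨u', hu', -, hw, -, hli⟩ :=
        exists_nonneg_linearIndepOn_support w 0 (fun _ _ _ => by simp) u hu
      refine ⟨support u', hli, fun i => u' i, fun i => hu' i, ?_⟩
      rw [← hw]
      exact (Finset.sum_congr_set _ _ _ (fun _ _ => rfl) (by simp +contextual)).symm
    · rintro ⟨S, -, x, hx, rfl⟩
      refine ⟨fun i => if h : i ∈ S then x ⟨i, h⟩ else 0, fun i => ?_, ?_⟩
      · dsimp only
        split_ifs with h
        exacts [hx ⟨i, h⟩, le_rfl]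
      · exact Finset.sum_congr_set _ _ _ (fun i hi => by simp [hi]) (by simp +contextual)
  rw [hunion]
  refine (Set.toFinite _).isClosed_biUnion fun S hS => ?_
  refine (LinearMap.isClosedEmbedding_of_injective ?_).isClosedMap _ isClosed_Ici
  exact LinearMap.ker_eq_bot.2 (linearIndependent_iff_injective_fintypeLinearCombination.1 hS)

theorem exists_nonneg_sum_smul_eq_of_forall_le_zero [LocallyConvexSpace ℝ E] (w : ι → E) (c : E)
    (h : ∀ f : StrongDual ℝ E, (∀ i, f (w i) ≤ 0) → f c ≤ 0) :
    ∃ u : ι → ℝ, 0 ≤ u ∧ ∑ i, u i • w i = c := by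
  classical
  set K := Fintype.linearCombination ℝ w '' Set.Ici 0
  suffices hc : c ∈ K by
    obtain ⟨u, hu, rfl⟩ := hc
    exact ⟨u, hu, (Fintype.linearCombination_apply ℝ w u).symm⟩
  by_contra hc
  obtain ⟨f, r, hfK, hfc⟩ := geometric_hahn_banach_closed_point
    ((convex_Ici 0).linear_image _) (isClosed_image_linearCombination_nonneg w) hc
  have hr : 0 < r := by simpa using hfK 0 ⟨0, Set.mem_Ici.2 le_rfl, map_zero _⟩
  have hsmul : ∀ x ∈ K, ∀ t : ℝ, 0 ≤ t → t • x ∈ K := by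
    rintro _ ⟨u, hu, rfl⟩ t ht
    exact ⟨t • u, smul_nonneg ht (Set.mem_Ici.1 hu), map_smul _ _ _⟩
  have hneg : ∀ x ∈ K, f x ≤ 0 := by
    intro x hx
    by_contra! hfx
    have := hfK _ (hsmul x hx (r / f x) (div_nonneg hr.le hfx.le))
    rw [map_smul, smul_eq_mul, div_mul_cancel₀ _ hfx.ne'] at this
    exact this.false
  have hw : ∀ i, w i ∈ K := fun i =>
    ⟨Pi.single i 1, Pi.single_nonneg.2 zero_le_one, by simp⟩
  linarith [h f fun i => hneg _ (hw i)]

end Farkas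

lemma StrongDual.exists_apply_prod_eq_dotProduct_add {n : Type*} [Fintype n]
    (f : StrongDual ℝ ((n → ℝ) × ℝ)) :
    ∃ g : n → ℝ, ∀ z τ, f (z, τ) = g ⬝ᵥ z + τ * f (0, 1) := by
  classical
  refine ⟨(dotProductEquiv ℝ n).symm (f.comp (.inl ℝ _ ℝ)).toLinearMap, fun z τ => ?_⟩
  have hφ := LinearMap.congr_fun
    ((dotProductEquiv ℝ n).apply_symm_apply (f.comp (.inl ℝ _ ℝ)).toLinearMap) z
  rw [dotProductEquiv_apply_apply] at hφ
  rw [hφ, ← smul_eq_mul, ← map_smul]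
  simp [← map_add]

section LinearSystems

variable {ι n : Type*} [Fintype n] (w : ι → n → ℝ) (b : ι → ℝ) (c : n → ℝ) (c₀ : ℝ)

lemma dotProduct_nonpos_of_forall_dotProduct_nonpos (hcons : ∃ y, ∀ i, w i ⬝ᵥ y ≤ b i)
    (hred : ∀ y, (∀ i, w i ⬝ᵥ y ≤ b i) → c ⬝ᵥ y ≤ c₀) {g : n → ℝ} (hg : ∀ i, w i ⬝ᵥ g ≤ 0) :
    c ⬝ᵥ g ≤ 0 := by
  obtain ⟨y, hy⟩ := hcons
  by_contra! hcg
  set t := (c₀ - c ⬝ᵥ y + 1) / (c ⬝ᵥ g)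
  have ht : 0 ≤ t := div_nonneg (by linarith [hred y hy]) hcg.le
  have hfeas : ∀ i, w i ⬝ᵥ (y + t • g) ≤ b i := fun i => by
    rw [dotProduct_add, dotProduct_smul, smul_eq_mul]
    nlinarith [hy i, hg i]
  have := hred _ hfeas
  rw [dotProduct_add, dotProduct_smul, smul_eq_mul, div_mul_cancel₀ _ hcg.ne'] at this
  linarith

theorem exists_nonneg_sum_smul_eq_sum_mul_le [Fintype ι] (hcons : ∃ y, ∀ i, w i ⬝ᵥ y ≤ b i)
    (hred : ∀ y, (∀ i, w i ⬝ᵥ y ≤ b i) → c ⬝ᵥ y ≤ c₀) :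
    ∃ u : ι → ℝ, 0 ≤ u ∧ ∑ i, u i • w i = c ∧ ∑ i, u i * b i ≤ c₀ := by
  refine (exists_nonneg_sum_smul_eq_of_forall_le_zero
    (fun o : Option ι => o.elim ((0 : n → ℝ), (1 : ℝ)) fun i => (w i, b i)) (c, c₀)
    fun f hf => ?_).elim fun u ⟨hu, huc⟩ => ?_
  · obtain ⟨g, hfg⟩ := f.exists_apply_prod_eq_dotProduct_add
    have hγ : f (0, 1) ≤ 0 := hf none
    have hw : ∀ i, g ⬝ᵥ w i + b i * f (0, 1) ≤ 0 := fun i => hfg (w i) (b i) ▸ hf (some i)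
    rw [hfg]
    -- If `f (0, 1) < 0`, a multiple of `g` solves the system; otherwise `g` is a direction of
    -- recession of its solution set.
    rcases hγ.lt_or_eq with hγ | hγ
    · have := hred ((-f (0, 1))⁻¹ • g) fun i => by
        rw [dotProduct_smul, smul_eq_mul, dotProduct_comm, inv_mul_le_iff₀ (neg_pos.2 hγ)]
        linarith [hw i]
      rw [dotProduct_smul, smul_eq_mul, inv_mul_le_iff₀ (neg_pos.2 hγ), dotProduct_comm] at this
      linarith
    · have := dotProduct_nonpos_of_forall_dotProduct_nonpos w b c c₀ hcons hred (g := g) fun i => by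
        simpa [hγ, dotProduct_comm] using hw i
      rw [hγ, dotProduct_comm]
      linarith
  · rw [Fintype.sum_option] at huc
    refine ⟨fun i => u (some i), fun i => hu _, ?_, ?_⟩
    · simpa [Prod.fst_sum] using congrArg Prod.fst huc
    · have := congrArg Prod.snd huc
      simp only [Option.elim, Prod.smul_mk, Prod.snd_add, Prod.snd_sum, smul_eq_mul,
        mul_one] at this
      have hnone : 0 ≤ u none := hu none
      dsimp only
      linarith

lemma sum_smul_dotProduct_le [Fintype ι] {u : ι → ℝ} (hu : 0 ≤ u) {y : n → ℝ}
    (hy : ∀ i, 0 < u i → w i ⬝ᵥ y ≤ b i) : (∑ i, u i • w i) ⬝ᵥ y ≤ ∑ i, u i * b i := by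
  rw [sum_dotProduct]
  refine Finset.sum_le_sum fun i _ => ?_
  rw [smul_dotProduct, smul_eq_mul]
  rcases (hu i).eq_or_lt with h | h
  · simp [← h]
  · exact mul_le_mul_of_nonneg_left (hy i h) h.le

variable {w} in
lemma LinearIndepOn.exists_dotProduct_eq {s : Set ι} (h : LinearIndepOn ℝ w s) :
    ∃ y : n → ℝ, ∀ i ∈ s, w i ⬝ᵥ y = b i := by
  have := h.finite
  have := Fintype.ofFinite s
  let M : Matrix s n ℝ := fun i => w i
  have hrange : LinearMap.range M.mulVecLin = ⊤ := Submodule.eq_top_of_finrank_eq <| by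
    rw [← Matrix.rank, LinearIndependent.rank_matrix h, Module.finrank_fintype_fun_eq_card]
  obtain ⟨y, hy⟩ := hrange.ge (Submodule.mem_top (x := fun i : s => b i))
  exact ⟨y, fun i hi => congrFun hy ⟨i, hi⟩⟩

theorem exists_nonneg_sum_smul_eq_linearIndepOn_of_subsystem [Fintype ι] (I : Set ι)
    (hcons : ∃ y, ∀ i ∈ I, w i ⬝ᵥ y ≤ b i)
    (hred : ∀ y, (∀ i ∈ I, w i ⬝ᵥ y ≤ b i) → c ⬝ᵥ y ≤ c₀) :
    ∃ v : ι → ℝ, 0 ≤ v ∧ ∑ i, v i • w i = c ∧ ∑ i, v i * b i ≤ c₀ ∧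
      LinearIndepOn ℝ w (support v) := by
  classical
  obtain ⟨y, hy⟩ := hcons
  obtain ⟨u, hu, huc, hub⟩ := exists_nonneg_sum_smul_eq_sum_mul_le (fun i : I => w i)
    (fun i => b i) c c₀ ⟨y, fun i => hy i i.2⟩ fun y hy' => hred y fun i hi => hy' ⟨i, hi⟩
  have H : ∀ c' : I → ℝ, 0 ≤ c' → ∑ i, c' i • w i = 0 → 0 ≤ ∑ i, c' i * b i := fun c' hc' h0 => by
    have := sum_smul_dotProduct_le (fun i : I => w i) (fun i => b i) hc' (y := y)
      fun i _ => hy i i.2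
    rwa [h0, zero_dotProduct] at this
  obtain ⟨u', hu', -, hw, hb, hli⟩ := exists_nonneg_linearIndepOn_support _ _ H u hu
  refine ⟨fun i => if h : i ∈ I then u' ⟨i, h⟩ else 0, fun i => ?_, ?_, ?_, ?_⟩
  · dsimp only
    split_ifs with h
    exacts [hu' _, le_rfl]
  · rw [← huc, ← hw]
    apply Finset.sum_congr_set I <;> intro i hi <;> simp [hi]
  · refine le_trans (le_of_eq ?_) (hb.trans hub)
    apply Finset.sum_congr_set I <;> intro i hi <;> simp [hi]
  · refine (hli.image_of_comp Subtype.val w).mono fun i hi => ?_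
    by_cases h : i ∈ I
    · exact ⟨⟨i, h⟩, by simpa [h] using hi, rfl⟩
    · simp [h] at hi

end LinearSystems

theorem stmt_13_general
    (m p : ℕ)
    (D : Matrix (Fin p) (Fin m) ℝ) (d : Fin p → ℝ) (s : Fin m → ℝ) (s₀ : ℝ) :
    ((∃ I : Finset (Fin p),
        (∃ y : Fin m → ℝ, ∀ i ∈ I, D i ⬝ᵥ y ≤ d i) ∧
        (∀ y : Fin m → ℝ, (∀ i ∈ I, D i ⬝ᵥ y ≤ d i) → s ⬝ᵥ y ≤ s₀)) ↔
      (∃ (v : Fin p → ℝ) (v₀ : ℝ), 0 ≤ v ∧ 0 ≤ v₀ ∧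
        Dᵀ.mulVec v = s ∧ d ⬝ᵥ v + v₀ = s₀ ∧
        LinearIndependent ℝ (fun i : {i : Fin p // 0 < v i} => D i.1))) ∧
    (∀ (v : Fin p → ℝ) (v₀ : ℝ), 0 ≤ v → 0 ≤ v₀ →
      Dᵀ.mulVec v = s → d ⬝ᵥ v + v₀ = s₀ →
      LinearIndependent ℝ (fun i : {i : Fin p // 0 < v i} => D i.1) →
      ∃ y : Fin m → ℝ, ∀ i : Fin p, 0 < v i → D i ⬝ᵥ y ≤ d i) := by
  classical
  have hDv : ∀ v, Dᵀ *ᵥ v = ∑ i, v i • D i := fun v => by rw [mulVec_transpose, vecMul_eq_sum]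
  have hdv : ∀ v, d ⬝ᵥ v = ∑ i, v i * d i := fun v => by simp [dotProduct, mul_comm]
  have consistent : ∀ v : Fin p → ℝ, LinearIndepOn ℝ D {i | 0 < v i} →
      ∃ y : Fin m → ℝ, ∀ i, 0 < v i → D i ⬝ᵥ y ≤ d i := fun v hli =>
    (hli.exists_dotProduct_eq d).imp fun y hy i hi => (hy i hi).le
  refine ⟨⟨?_, ?_⟩, fun v _ _ _ _ _ hli => consistent v hli⟩
  · rintro ⟨I, hcons, hred⟩
    obtain ⟨v, hv, hvs, hvd, hli⟩ :=
      exists_nonneg_sum_smul_eq_linearIndepOn_of_subsystem D d s s₀ I hcons hred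
    refine ⟨v, s₀ - d ⬝ᵥ v, hv, by rw [hdv]; linarith, by rw [hDv, hvs], by ring, ?_⟩
    exact hli.mono fun i (hi : 0 < v i) => hi.ne'
  · rintro ⟨v, v₀, hv, hv₀, hvs, hvd, hli⟩
    refine ⟨Finset.univ.filter (0 < v ·), by simpa using consistent v hli, fun y hy => ?_⟩
    calc s ⬝ᵥ y = (∑ i, v i • D i) ⬝ᵥ y := by rw [← hDv, hvs]
      _ ≤ ∑ i, v i * d i := sum_smul_dotProduct_le D d hv fun i hi => hy i (by simpa using hi)
      _ ≤ s₀ := by rw [← hdv]; linarith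

/-- Theorem 7 of the paper: characterization of redundant inequalities for an
inconsistent system of linear inequalities. -/
theorem stmt_13
    (m p : ℕ) (hm : 0 < m) (hp : 0 < p)
    (D : Matrix (Fin p) (Fin m) ℝ) (d : Fin p → ℝ) (s : Fin m → ℝ) (s₀ : ℝ)
    (hincons : ¬ ∃ y : Fin m → ℝ, D.mulVec y ≤ d) :
    ((∃ I : Finset (Fin p),
        (∃ y : Fin m → ℝ, ∀ i ∈ I, D i ⬝ᵥ y ≤ d i) ∧
        (∀ y : Fin m → ℝ, (∀ i ∈ I, D i ⬝ᵥ y ≤ d i) → s ⬝ᵥ y ≤ s₀)) ↔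
      (∃ (v : Fin p → ℝ) (v₀ : ℝ), 0 ≤ v ∧ 0 ≤ v₀ ∧
        Dᵀ.mulVec v = s ∧ d ⬝ᵥ v + v₀ = s₀ ∧
        LinearIndependent ℝ (fun i : {i : Fin p // 0 < v i} => D i.1))) ∧
    (∀ (v : Fin p → ℝ) (v₀ : ℝ), 0 ≤ v → 0 ≤ v₀ →
      Dᵀ.mulVec v = s → d ⬝ᵥ v + v₀ = s₀ →
      LinearIndependent ℝ (fun i : {i : Fin p // 0 < v i} => D i.1) →
      ∃ y : Fin m → ℝ, ∀ i : Fin p, 0 < v i → D i ⬝ᵥ y ≤ d i) :=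
  stmt_13_general m p D d s s₀
end

section
/- Suppose the system D y ≤ d is consistent and the inequality s·y ≤ s₀ is redundant for it. Then the linear program: minimize d·v over v ∈ ℝ^p subject to Dᵀv = s, v ≥ 0, has an optimal solution v*, and s₀ ≥ d·v*. If s₀ > d·v*, then s·y ≤ s₀ is strongly redundant for D y ≤ d; if s₀ = d·v*, then s·y ≤ s₀ is weakly redundant for D y ≤ d. -/
/-!
Farkas' lemma for a nonempty polyhedron `D y ≤ d`: if `s ⬝ᵥ y ≤ t` holds on it, then some
`v ≥ 0` has `Dᵀ v = s` and `d ⬝ᵥ v ≤ t`. It comes from separating `(s, t)` from the cone spanned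
by the rows of `(D | d)` and by `(0, 1)`; the cone is closed because, by the conic Carathéodory
argument, it is a finite union of cones over linearly independent families. Taking `t` to be the
supremum of `s ⬝ᵥ y` gives a dual optimum `v*`, and weak duality `s ⬝ᵥ y ≤ d ⬝ᵥ v` then shows that
`s ⬝ᵥ y ≤ s₀ - ε` is redundant exactly when `d ⬝ᵥ v* ≤ s₀ - ε`.
-/

open Function Set Matrix

section ConicCaratheodory

variable {ι : Type*} [Fintype ι]

theorem exists_nonneg_sub_smul_support_ssubset {c g : ι → ℝ} (hc : 0 ≤ c)
    (hg : support g ⊆ support c) (hpos : ∃ i, 0 < g i) :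
    ∃ τ : ℝ, 0 ≤ c - τ • g ∧ support (c - τ • g) ⊂ support c := by
  classical
  obtain ⟨i₀, hi₀, hmin⟩ := (Finset.univ.filter fun i => 0 < g i).exists_min_image
    (fun i => c i / g i) (by simpa [Finset.filter_nonempty_iff] using hpos)
  have hg₀ : 0 < g i₀ := (Finset.mem_filter.1 hi₀).2
  have hτ : 0 ≤ c i₀ / g i₀ := div_nonneg (hc i₀) hg₀.le
  refine ⟨c i₀ / g i₀, fun i => ?_, ?_⟩
  · simp only [Pi.zero_apply, Pi.sub_apply, Pi.smul_apply, smul_eq_mul, sub_nonneg]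
    rcases lt_or_ge 0 (g i) with hgi | hgi
    · exact (le_div_iff₀ hgi).1 (hmin i (by simp [hgi]))
    · exact (mul_nonpos_of_nonneg_of_nonpos hτ hgi).trans (hc i)
  · have hsub : support (c - (c i₀ / g i₀) • g) ⊆ support c :=
      (support_sub _ _).trans (union_subset subset_rfl ((support_const_smul_subset _ _).trans hg))
    refine (ssubset_iff_of_subset hsub).2 ⟨i₀, hg hg₀.ne', ?_⟩
    simp [div_mul_cancel₀ _ hg₀.ne']

theorem exists_nonneg_map_eq_ker_trivial_on_support {E : Type*} [AddCommGroup E] [Module ℝ E]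
    (L : (ι → ℝ) →ₗ[ℝ] E) {c : ι → ℝ} (hc : 0 ≤ c) :
    ∃ c', 0 ≤ c' ∧ L c' = L c ∧ ∀ g, L g = 0 → support g ⊆ support c' → g = 0 := by
  obtain ⟨c', ⟨hc'0, hc'L⟩, hmin⟩ := (measure fun c' : ι → ℝ => (support c').ncard).wf.has_min
    {c' | 0 ≤ c' ∧ L c' = L c} ⟨c, hc, rfl⟩
  refine ⟨c', hc'0, hc'L, fun g hgL hgc => ?_⟩
  by_contra hg0
  obtain ⟨i, hi⟩ := Function.ne_iff.1 hg0
  obtain ⟨g', hg'L, hg'c, hpos⟩ : ∃ g', L g' = 0 ∧ support g' ⊆ support c' ∧ ∃ i, 0 < g' i := by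
    rcases lt_or_gt_of_ne hi with hneg | hpos
    · exact ⟨-g, by simp [hgL], by simpa using hgc, i, by simpa using hneg⟩
    · exact ⟨g, hgL, hgc, i, hpos⟩
  obtain ⟨τ, hτ0, hτsupp⟩ := exists_nonneg_sub_smul_support_ssubset hc'0 hg'c hpos
  exact hmin _ ⟨hτ0, by simp [hg'L, hc'L]⟩ (ncard_lt_ncard hτsupp (toFinite _))

end ConicCaratheodory

theorem LinearMap.isClosed_image_of_disjoint_ker {𝕜 V E : Type*} [NontriviallyNormedField 𝕜]
    [CompleteSpace 𝕜] [AddCommGroup V] [TopologicalSpace V] [IsTopologicalAddGroup V]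
    [Module 𝕜 V] [ContinuousSMul 𝕜 V] [T2Space V] [FiniteDimensional 𝕜 V]
    [AddCommGroup E] [TopologicalSpace E] [IsTopologicalAddGroup E] [Module 𝕜 E]
    [ContinuousSMul 𝕜 E] [T2Space E] (L : V →ₗ[𝕜] E) {W : Submodule 𝕜 V}
    (hW : Disjoint W (LinearMap.ker L)) {K : Set V} (hKW : K ⊆ W) (hK : IsClosed K) :
    IsClosed (L '' K) := by
  have hL : Topology.IsClosedEmbedding (L.domRestrict W) :=
    LinearMap.isClosedEmbedding_of_injective
      (by rwa [LinearMap.ker_domRestrict, ← Submodule.disjoint_iff_comap_eq_bot])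
  have hKeq : L '' K = L.domRestrict W '' (W.subtype ⁻¹' K) := by
    rw [LinearMap.domRestrict, LinearMap.coe_comp, image_comp, Submodule.coe_subtype,
      image_preimage_eq_of_subset (by simpa using hKW)]
  rw [hKeq]
  exact hL.isClosedMap _ (hK.preimage continuous_subtype_val)

theorem LinearMap.isClosed_image_nonneg {ι E : Type*} [Fintype ι] [AddCommGroup E]
    [TopologicalSpace E] [IsTopologicalAddGroup E] [Module ℝ E] [ContinuousSMul ℝ E] [T2Space E]
    (L : (ι → ℝ) →ₗ[ℝ] E) : IsClosed (L '' Ici 0) := by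
  set W : Set ι → Submodule ℝ (ι → ℝ) := fun S => Submodule.pi Sᶜ fun _ => ⊥
  have hcone : L '' Ici 0 =
      ⋃ S ∈ {S | Disjoint (W S) (LinearMap.ker L)}, L '' (Ici 0 ∩ W S) := by
    refine Subset.antisymm ?_ (iUnion₂_subset fun S _ => image_mono inter_subset_left)
    rintro _ ⟨c, hc, rfl⟩
    obtain ⟨c', hc'0, hc'L, hinj⟩ := exists_nonneg_map_eq_ker_trivial_on_support L hc
    refine mem_biUnion (x := support c') ?_ ⟨c', ⟨hc'0, ?_⟩, hc'L⟩
    · refine Submodule.disjoint_def.2 fun g hg hgL => hinj g hgL fun i hi => ?_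
      by_contra hc'i
      exact hi (by simpa using (Submodule.mem_pi.1 hg) i hc'i)
    · simp [W]
  rw [hcone]
  refine (toFinite _).isClosed_biUnion fun S hS => L.isClosed_image_of_disjoint_ker hS
    inter_subset_right (isClosed_Ici.inter ?_)
  exact (W S).closed_of_finiteDimensional

theorem Matrix.exists_nonneg_transpose_mulVec_eq_or_exists {ι κ : Type*} [Fintype ι] [Fintype κ]
    (A : Matrix ι κ ℝ) (b : κ → ℝ) :
    (∃ v, 0 ≤ v ∧ Aᵀ *ᵥ v = b) ∨ ∃ y, 0 ≤ A *ᵥ y ∧ y ⬝ᵥ b < 0 := by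
  classical
  let C : ProperCone ℝ (κ → ℝ) :=
    { toSubmodule := (PointedCone.positive ℝ (ι → ℝ)).map Aᵀ.mulVecLin
      isClosed' := by
        simpa [PointedCone.coe_map] using Aᵀ.mulVecLin.isClosed_image_nonneg }
  by_cases hb : b ∈ C
  · left
    simpa [C, PointedCone.mem_map, mulVec_transpose] using hb
  right
  obtain ⟨f, hfC, hfb⟩ := C.hyperplane_separation_point hb
  set y := (dotProductEquiv ℝ κ).symm f.toLinearMap
  have hf : ∀ x, f x = y ⬝ᵥ x := fun x =>
    (LinearMap.congr_fun ((dotProductEquiv ℝ κ).apply_symm_apply f.toLinearMap) x).symm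
  refine ⟨y, fun i => ?_, hf b ▸ hfb⟩
  have hAi : A i ∈ C := PointedCone.mem_map.2 ⟨Pi.single i 1, by simp, by simp; rfl⟩
  simpa [hf, mulVec, dotProduct_comm] using hfC _ hAi

section Polyhedron

variable {ι κ : Type*} [Fintype κ] {D : Matrix ι κ ℝ} {d : ι → ℝ} {s : κ → ℝ} {t : ℝ}

theorem dotProduct_le_of_transpose_mulVec_eq [Fintype ι] {v : ι → ℝ} {y : κ → ℝ} (hv : 0 ≤ v)
    (hDv : Dᵀ *ᵥ v = s) (hy : D *ᵥ y ≤ d) : s ⬝ᵥ y ≤ d ⬝ᵥ v := by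
  rw [← hDv, mulVec_transpose, ← dotProduct_mulVec, dotProduct_comm d]
  exact dotProduct_le_dotProduct_of_nonneg_left hy hv

theorem dotProduct_nonpos_of_mulVec_nonpos (hcons : ∃ y, D *ᵥ y ≤ d)
    (hred : ∀ y, D *ᵥ y ≤ d → s ⬝ᵥ y ≤ t) {z : κ → ℝ} (hz : D *ᵥ z ≤ 0) : s ⬝ᵥ z ≤ 0 := by
  obtain ⟨y₀, hy₀⟩ := hcons
  by_contra! hsz
  set r := (t - s ⬝ᵥ y₀ + 1) / (s ⬝ᵥ z)
  have hr : 0 ≤ r := div_nonneg (by linarith [hred y₀ hy₀]) hsz.le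
  have hfeas : D *ᵥ (y₀ + r • z) ≤ d := by
    rw [mulVec_add, mulVec_smul]
    exact add_le_of_le_of_nonpos hy₀ (smul_nonpos_of_nonneg_of_nonpos hr hz)
  have := hred _ hfeas
  rw [dotProduct_add, dotProduct_smul, smul_eq_mul, div_mul_cancel₀ _ hsz.ne'] at this
  linarith

theorem dotProduct_le_mul_of_mulVec_le_smul (hcons : ∃ y, D *ᵥ y ≤ d)
    (hred : ∀ y, D *ᵥ y ≤ d → s ⬝ᵥ y ≤ t) {z : κ → ℝ} {η : ℝ} (hη : 0 ≤ η)
    (hz : D *ᵥ z ≤ η • d) : s ⬝ᵥ z ≤ η * t := by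
  rcases hη.eq_or_lt with rfl | hη
  · simpa using dotProduct_nonpos_of_mulVec_nonpos hcons hred (by simpa using hz)
  have hfeas : D *ᵥ (η⁻¹ • z) ≤ d := by
    rw [mulVec_smul, inv_smul_le_iff_of_pos hη]
    exact hz
  have := hred _ hfeas
  rw [dotProduct_smul, smul_eq_mul, inv_mul_le_iff₀ hη] at this
  exact this

theorem exists_nonneg_transpose_mulVec_eq_dotProduct_le [Fintype ι] (hcons : ∃ y, D *ᵥ y ≤ d)
    (hred : ∀ y, D *ᵥ y ≤ d → s ⬝ᵥ y ≤ t) : ∃ v, 0 ≤ v ∧ Dᵀ *ᵥ v = s ∧ d ⬝ᵥ v ≤ t := by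
  rcases (fromBlocks D (replicateCol Unit d) (0 : Matrix Unit κ ℝ) 1
    ).exists_nonneg_transpose_mulVec_eq_or_exists (Sum.elim s fun _ => t)
    with ⟨v, hv, hvb⟩ | ⟨y, hy, hyb⟩
  · have hs : ∀ j, (Dᵀ *ᵥ (v ∘ Sum.inl)) j = s j := fun j => by
      simpa [fromBlocks_transpose, fromBlocks_mulVec] using congrFun hvb (Sum.inl j)
    have ht : d ⬝ᵥ (v ∘ Sum.inl) + v (Sum.inr ()) = t := by
      simpa [fromBlocks_transpose, fromBlocks_mulVec, replicateRow_mulVec_eq_const]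
        using congrFun hvb (Sum.inr ())
    have hμ : 0 ≤ v (Sum.inr ()) := hv _
    exact ⟨v ∘ Sum.inl, fun i => hv _, funext hs, by linarith⟩
  · set w := y ∘ Sum.inl
    set η := y (Sum.inr ())
    have hη : 0 ≤ η := by simpa [fromBlocks_mulVec] using hy (Sum.inr ())
    have hw : D *ᵥ (-w) ≤ η • d := fun i => by
      have := hy (Sum.inl i)
      simp [mulVec, dotProduct, w, η] at this ⊢
      linarith
    have hwt : w ⬝ᵥ s + η * t < 0 := by simpa [dotProduct, w, η] using hyb
    have := dotProduct_le_mul_of_mulVec_le_smul hcons hred hη hw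
    rw [dotProduct_neg, dotProduct_comm] at this
    linarith

theorem exists_dual_optimum [Fintype ι] (hcons : ∃ y, D *ᵥ y ≤ d)
    (hred : ∀ y, D *ᵥ y ≤ d → s ⬝ᵥ y ≤ t) :
    ∃ v, (0 ≤ v ∧ Dᵀ *ᵥ v = s) ∧ ∀ v', 0 ≤ v' → Dᵀ *ᵥ v' = s → d ⬝ᵥ v ≤ d ⬝ᵥ v' := by
  obtain ⟨y₀, hy₀⟩ := hcons
  set values := (s ⬝ᵥ ·) '' {y | D *ᵥ y ≤ d}
  have hne : values.Nonempty := ⟨_, y₀, hy₀, rfl⟩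
  have hbdd : BddAbove values := ⟨t, forall_mem_image.2 hred⟩
  obtain ⟨v, hv, hDv, hv_sup⟩ := exists_nonneg_transpose_mulVec_eq_dotProduct_le ⟨y₀, hy₀⟩
    fun y hy => le_csSup hbdd (mem_image_of_mem _ hy)
  refine ⟨v, ⟨hv, hDv⟩, fun v' hv' hDv' => hv_sup.trans (csSup_le hne ?_)⟩
  exact forall_mem_image.2 fun y hy => dotProduct_le_of_transpose_mulVec_eq hv' hDv' hy

end Polyhedron

theorem stmt_14_general
    (m p : ℕ)
    (D : Matrix (Fin p) (Fin m) ℝ) (d : Fin p → ℝ) (s : Fin m → ℝ) (s₀ : ℝ)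
    (hcons : ∃ y : Fin m → ℝ, D.mulVec y ≤ d)
    (hred : ∀ y : Fin m → ℝ, D.mulVec y ≤ d → s ⬝ᵥ y ≤ s₀) :
    (∃ v : Fin p → ℝ, (0 ≤ v ∧ Dᵀ.mulVec v = s) ∧
        ∀ v' : Fin p → ℝ, 0 ≤ v' → Dᵀ.mulVec v' = s → d ⬝ᵥ v ≤ d ⬝ᵥ v') ∧
    (∀ v : Fin p → ℝ, 0 ≤ v → Dᵀ.mulVec v = s →
      (∀ v' : Fin p → ℝ, 0 ≤ v' → Dᵀ.mulVec v' = s → d ⬝ᵥ v ≤ d ⬝ᵥ v') →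
      d ⬝ᵥ v ≤ s₀ ∧
      (d ⬝ᵥ v < s₀ →
        ∃ ε : ℝ, 0 < ε ∧ ∀ y : Fin m → ℝ, D.mulVec y ≤ d → s ⬝ᵥ y ≤ s₀ - ε) ∧
      (s₀ = d ⬝ᵥ v →
        ¬ ∃ ε : ℝ, 0 < ε ∧ ∀ y : Fin m → ℝ, D.mulVec y ≤ d → s ⬝ᵥ y ≤ s₀ - ε)) := by
  refine ⟨exists_dual_optimum hcons hred, fun v hv hDv hopt => ?_⟩
  have hle : ∀ t, (∀ y, D *ᵥ y ≤ d → s ⬝ᵥ y ≤ t) → d ⬝ᵥ v ≤ t := fun t ht => by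
    obtain ⟨v', hv', hDv', hv't⟩ := exists_nonneg_transpose_mulVec_eq_dotProduct_le hcons ht
    exact (hopt v' hv' hDv').trans hv't
  refine ⟨hle s₀ hred, fun hlt => ⟨s₀ - d ⬝ᵥ v, sub_pos.2 hlt, fun y hy => ?_⟩, ?_⟩
  · linarith [dotProduct_le_of_transpose_mulVec_eq hv hDv hy]
  · rintro heq ⟨ε, hε, hε_red⟩
    linarith [hle _ hε_red]

/-- Corollary 5 of the paper: the dual linear program attached to a redundant
inequality has an optimal solution, and strict/tight inequality at the optimum distinguishes
strong and weak redundancy. -/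
theorem stmt_14
    (m p : ℕ) (hm : 0 < m) (hp : 0 < p)
    (D : Matrix (Fin p) (Fin m) ℝ) (d : Fin p → ℝ) (s : Fin m → ℝ) (s₀ : ℝ)
    (hcons : ∃ y : Fin m → ℝ, D.mulVec y ≤ d)
    (hred : ∀ y : Fin m → ℝ, D.mulVec y ≤ d → s ⬝ᵥ y ≤ s₀) :
    (∃ v : Fin p → ℝ, (0 ≤ v ∧ Dᵀ.mulVec v = s) ∧
        ∀ v' : Fin p → ℝ, 0 ≤ v' → Dᵀ.mulVec v' = s → d ⬝ᵥ v ≤ d ⬝ᵥ v') ∧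
    (∀ v : Fin p → ℝ, 0 ≤ v → Dᵀ.mulVec v = s →
      (∀ v' : Fin p → ℝ, 0 ≤ v' → Dᵀ.mulVec v' = s → d ⬝ᵥ v ≤ d ⬝ᵥ v') →
      d ⬝ᵥ v ≤ s₀ ∧
      (d ⬝ᵥ v < s₀ →
        ∃ ε : ℝ, 0 < ε ∧ ∀ y : Fin m → ℝ, D.mulVec y ≤ d → s ⬝ᵥ y ≤ s₀ - ε) ∧
      (s₀ = d ⬝ᵥ v →
        ¬ ∃ ε : ℝ, 0 < ε ∧ ∀ y : Fin m → ℝ, D.mulVec y ≤ d → s ⬝ᵥ y ≤ s₀ - ε)) :=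
  stmt_14_general m p D d s s₀ hcons hred
end

section
/- Under the perfect-polytope hypotheses (a)–(c) on the system D y ≤ d, the symmetric cones satisfy Y⁺(y^r) ∩ Y⁺(y^k) = ∅ for all r ≠ k. Moreover, if z¹, …, z^N are arbitrary points with z^r ∈ Y⁺(y^r) for each r = 1, …, N, then Y is contained in the convex hull of {z¹, …, z^N}. -/
/-!
At a vertex `y` of the polytope the `m` active rows form a basis, with dual vectors `w k`
(`D i ⬝ᵥ w k = δ i k` on active rows). An inactive row satisfies `D j ⬝ᵥ w k ≤ 0`: otherwise
exchanging `k` for `j` gives a nonsingular subsystem whose apex, a point of `Y` by (b), lies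
on the line `y + ℝ • w k` on the side where `D j` decreases, yet makes constraint `j` tight.
Expanding `z - y` in the dual vectors, every inactive constraint then holds strictly on
`Y⁺(y)`. Distinct vertices differ in an active constraint, which is reversed on one cone and
strict on the other, so the cones are disjoint.

For the hull, separate a point `y ∈ Y` from the hull of the `z r` by a linear functional `f`.
By Krein–Milman `f` is maximal on `Y` at some vertex `y^k`, and `y^k + t • (y^k - z^k)` stays
in `Y` for small `t > 0`, so `f z^k ≥ f y^k ≥ f y`, a contradiction.
-/

open Matrix

open Set Filter Topology

section DualFamily

variable {κ n : Type*} [Fintype κ] [Fintype n] {a : κ → n → ℝ}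

theorem surjective_dotProduct_of_ker_eq_zero (h : ∀ v, (∀ k, a k ⬝ᵥ v = 0) → v = 0)
    (hcard : Fintype.card κ = Fintype.card n) : Function.Surjective fun v k => a k ⬝ᵥ v := by
  have hinj : Function.Injective (Matrix.of a).mulVecLin :=
    (injective_iff_map_eq_zero _).2 fun v hv => h v (congrFun hv)
  exact (LinearMap.injective_iff_surjective_of_finrank_eq_finrank (by simp [hcard])).1 hinj

theorem linearIndependent_of_surjective_dotProduct
    (h : Function.Surjective fun v k => a k ⬝ᵥ v) : LinearIndependent ℝ a := by
  refine Fintype.linearIndependent_iff.2 fun g hg => ?_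
  obtain ⟨v, hv⟩ := h g
  have hgg : g ⬝ᵥ g = 0 := by
    calc g ⬝ᵥ g = (∑ k, g k • a k) ⬝ᵥ v := by
          nth_rewrite 2 [← hv]
          rw [sum_dotProduct]
          simp only [smul_dotProduct, smul_eq_mul]
          rfl
      _ = 0 := by rw [hg, zero_dotProduct]
  exact congrFun (dotProduct_self_eq_zero.1 hgg)

theorem exists_dual_of_ker_eq_zero [DecidableEq κ] (h : ∀ v, (∀ k, a k ⬝ᵥ v = 0) → v = 0)
    (hcard : Fintype.card κ = Fintype.card n) :
    ∃ w : κ → n → ℝ, (∀ k l, a k ⬝ᵥ w l = (Pi.single l 1 : κ → ℝ) k) ∧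
      ∀ v, v = ∑ k, (a k ⬝ᵥ v) • w k := by
  choose w hw using fun l => surjective_dotProduct_of_ker_eq_zero h hcard (Pi.single l 1)
  refine ⟨w, fun k l => congrFun (hw l) k, fun v => ?_⟩
  refine sub_eq_zero.1 (h _ fun k => ?_)
  simp [dotProduct_sub, dotProduct_sum, dotProduct_smul, fun l => congrFun (hw l) k,
    Pi.single_apply]

end DualFamily

theorem IsCompact.eq_convexHull_extremePoints {E : Type*} [AddCommGroup E] [Module ℝ E]
    [TopologicalSpace E] [T2Space E] [IsTopologicalAddGroup E] [ContinuousSMul ℝ E]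
    [LocallyConvexSpace ℝ E] {s : Set E} (hs : IsCompact s) (hconv : Convex ℝ s)
    (hfin : (s.extremePoints ℝ).Finite) : s = convexHull ℝ (s.extremePoints ℝ) := by
  rw [← (hfin.isClosed_convexHull (𝕜 := ℝ)).closure_eq, closure_convexHull_extremePoints hs hconv]

section Polyhedron

variable {ι n : Type*} [Fintype n]

def polyhedron (D : Matrix ι n ℝ) (d : ι → ℝ) : Set (n → ℝ) := {y | D *ᵥ y ≤ d}

noncomputable def activeSet [Fintype ι] (D : Matrix ι n ℝ) (d : ι → ℝ) (y : n → ℝ) : Finset ι :=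
  Finset.univ.filter fun i => D i ⬝ᵥ y = d i

def ApexesInPolyhedron [Fintype ι] (D : Matrix ι n ℝ) (d : ι → ℝ) : Prop :=
  ∀ I : Finset ι, I.card = Fintype.card n → LinearIndependent ℝ (fun i : I => D i) →
    ∃ y₀ ∈ polyhedron D d, ∀ i ∈ I, D i ⬝ᵥ y₀ = d i

-- `Y⁺(y)` of the paper.
def symmetricCone [Fintype ι] (D : Matrix ι n ℝ) (d : ι → ℝ) (y : n → ℝ) : Set (n → ℝ) :=
  {z | ∀ i ∈ activeSet D d y, d i ≤ D i ⬝ᵥ z}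

variable {D : Matrix ι n ℝ} {d : ι → ℝ} {y z v w : n → ℝ}

theorem mem_polyhedron : y ∈ polyhedron D d ↔ ∀ i, D i ⬝ᵥ y ≤ d i := Iff.rfl

theorem convex_polyhedron : Convex ℝ (polyhedron D d) :=
  (convex_Iic d).linear_preimage D.mulVecLin

theorem isClosed_polyhedron : IsClosed (polyhedron D d) :=
  isClosed_Iic.preimage (continuous_const.matrix_mulVec continuous_id)

variable [Fintype ι]

theorem mem_activeSet {i : ι} : i ∈ activeSet D d y ↔ D i ⬝ᵥ y = d i := by
  simp [activeSet]

theorem eventually_add_smul_mem_polyhedron (hy : y ∈ polyhedron D d)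
    (hw : ∀ i ∈ activeSet D d y, D i ⬝ᵥ w ≤ 0) :
    ∀ᶠ t in 𝓝[>] (0 : ℝ), y + t • w ∈ polyhedron D d := by
  simp only [mem_polyhedron, dotProduct_add, dotProduct_smul, smul_eq_mul]
  refine eventually_all.2 fun i => ?_
  rcases (mem_polyhedron.1 hy i).eq_or_lt with hi | hi
  · filter_upwards [self_mem_nhdsWithin] with t (ht : 0 < t)
    nlinarith [hw i (mem_activeSet.2 hi)]
  · have hcont : Tendsto (fun t : ℝ => D i ⬝ᵥ y + t * (D i ⬝ᵥ w)) (𝓝 0) (𝓝 (D i ⬝ᵥ y)) := by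
      simpa using ((continuous_id.mul continuous_const).const_add (D i ⬝ᵥ y)).tendsto (0 : ℝ)
    exact nhdsWithin_le_nhds ((hcont.eventually (gt_mem_nhds hi)).mono fun _ => le_of_lt)

theorem dotProduct_lt_of_notMem_activeSet {j : ι} (hy : y ∈ polyhedron D d)
    (hj : j ∉ activeSet D d y) : D j ⬝ᵥ y < d j :=
  (mem_polyhedron.1 hy j).lt_of_ne (mt mem_activeSet.2 hj)

theorem eq_zero_of_mem_extremePoints_polyhedron (hy : y ∈ (polyhedron D d).extremePoints ℝ)
    (hv : ∀ i ∈ activeSet D d y, D i ⬝ᵥ v = 0) : v = 0 := by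
  obtain ⟨t, ⟨hplus, hminus⟩, ht⟩ :=
    (((eventually_add_smul_mem_polyhedron hy.1 fun i hi => (hv i hi).le).and
      (eventually_add_smul_mem_polyhedron (w := -v) hy.1 fun i hi => by simp [hv i hi])).and
        self_mem_nhdsWithin).exists
  have hmid : y ∈ openSegment ℝ (y + t • v) (y + t • -v) :=
    ⟨1 / 2, 1 / 2, by norm_num, by norm_num, by norm_num, by module⟩
  simpa [ne_of_gt ht] using hy.2 hplus hminus hmid

theorem eq_of_activeSet_subset {y' : n → ℝ} (hy : y ∈ (polyhedron D d).extremePoints ℝ)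
    (h : activeSet D d y ⊆ activeSet D d y') : y = y' :=
  sub_eq_zero.1 <| eq_zero_of_mem_extremePoints_polyhedron hy fun i hi => by
    rw [dotProduct_sub, mem_activeSet.1 hi, mem_activeSet.1 (h hi), sub_self]

theorem map_le_of_isMaxOn_polyhedron (f : (n → ℝ) →ₗ[ℝ] ℝ) (hy : y ∈ polyhedron D d)
    (hmax : IsMaxOn f (polyhedron D d) y) (hz : z ∈ symmetricCone D d y) : f y ≤ f z := by
  have hdir : ∀ i ∈ activeSet D d y, D i ⬝ᵥ (y - z) ≤ 0 := fun i hi => by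
    rw [dotProduct_sub, mem_activeSet.1 hi]
    linarith [hz i hi]
  obtain ⟨t, hmem, ht⟩ :=
    ((eventually_add_smul_mem_polyhedron hy hdir).and self_mem_nhdsWithin).exists
  have hle : f (y + t • (y - z)) ≤ f y := hmax hmem
  rw [map_add, map_smul, map_sub, smul_eq_mul] at hle
  nlinarith [show (0 : ℝ) < t from ht]

theorem dotProduct_nonpos_of_active_eq_single [DecidableEq ι]
    (hapex : ApexesInPolyhedron D d)
    (hy : y ∈ (polyhedron D d).extremePoints ℝ) (hcard : (activeSet D d y).card = Fintype.card n)
    {j k : ι} (hj : j ∉ activeSet D d y) (hk : k ∈ activeSet D d y)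
    (hw : ∀ i ∈ activeSet D d y, D i ⬝ᵥ w = (Pi.single k 1 : ι → ℝ) i) : D j ⬝ᵥ w ≤ 0 := by
  set I := activeSet D d y
  have hline : ∀ u, (∀ i ∈ I.erase k, D i ⬝ᵥ u = 0) → u = (D k ⬝ᵥ u) • w := fun u hu =>
    sub_eq_zero.1 <| eq_zero_of_mem_extremePoints_polyhedron hy fun i hi => by
      rw [dotProduct_sub, dotProduct_smul, hw i hi, smul_eq_mul]
      by_cases hik : i = k
      · simp [hik]
      · simp [hik, hu i (Finset.mem_erase.2 ⟨hik, hi⟩)]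
  by_contra! hjw
  set I' := insert j (I.erase k)
  have hcard' : I'.card = Fintype.card n := by
    have := Finset.card_pos.2 ⟨k, hk⟩
    rw [Finset.card_insert_of_notMem fun h => hj (Finset.mem_of_mem_erase h),
      Finset.card_erase_of_mem hk]
    omega
  have hindep : LinearIndependent ℝ (fun i : I' => D i) := by
    refine linearIndependent_of_surjective_dotProduct
      (surjective_dotProduct_of_ker_eq_zero (fun u hu => ?_) (by simpa using hcard'))
    have hu' : ∀ i ∈ I', D i ⬝ᵥ u = 0 := fun i hi => hu ⟨i, hi⟩
    have hlu := hline u fun i hi => hu' i (Finset.mem_insert_of_mem hi)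
    have hku : D k ⬝ᵥ u = 0 := by
      have hju := hu' j (Finset.mem_insert_self _ _)
      rw [hlu, dotProduct_smul, smul_eq_mul] at hju
      exact (mul_eq_zero.1 hju).resolve_right hjw.ne'
    rw [hlu, hku, zero_smul]
  obtain ⟨y₀, hy₀, hy₀I'⟩ := hapex I' hcard' hindep
  -- `y₀ - y = (D k ⬝ᵥ y₀ - d k) • w`, a nonpositive multiple of `w`.
  have hedge := hline (y₀ - y) fun i hi => by
    rw [dotProduct_sub, hy₀I' i (Finset.mem_insert_of_mem hi),
      mem_activeSet.1 (Finset.mem_of_mem_erase hi), sub_self]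
  have hj' := congrArg (D j ⬝ᵥ ·) hedge
  simp only [dotProduct_sub, dotProduct_smul, smul_eq_mul, hy₀I' j (Finset.mem_insert_self _ _),
    mem_activeSet.1 hk] at hj'
  nlinarith [mem_polyhedron.1 hy₀ k, dotProduct_lt_of_notMem_activeSet hy.1 hj]

theorem dotProduct_lt_of_mem_symmetricCone
    (hapex : ApexesInPolyhedron D d)
    (hy : y ∈ (polyhedron D d).extremePoints ℝ) (hcard : (activeSet D d y).card = Fintype.card n)
    {j : ι} (hj : j ∉ activeSet D d y) (hz : z ∈ symmetricCone D d y) : D j ⬝ᵥ z < d j := by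
  classical
  set I := activeSet D d y
  obtain ⟨w, hw, hexp⟩ := exists_dual_of_ker_eq_zero (a := fun i : I => D i)
    (fun v hv => eq_zero_of_mem_extremePoints_polyhedron hy fun i hi => hv ⟨i, hi⟩)
    (by simpa using hcard)
  have hjw : ∀ k : I, D j ⬝ᵥ w k ≤ 0 := fun k =>
    dotProduct_nonpos_of_active_eq_single hapex hy hcard hj k.2 fun i hi => by
      simpa [Pi.single_apply, Subtype.ext_iff] using hw ⟨i, hi⟩ k
  have hdecomp : D j ⬝ᵥ (z - y) = ∑ k : I, (D k ⬝ᵥ (z - y)) * (D j ⬝ᵥ w k) := by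
    conv_lhs => rw [hexp (z - y)]
    simp [dotProduct_sum, dotProduct_smul]
  have hsum : ∑ k : I, (D k ⬝ᵥ (z - y)) * (D j ⬝ᵥ w k) ≤ 0 :=
    Finset.sum_nonpos fun k _ => mul_nonpos_of_nonneg_of_nonpos
      (by rw [dotProduct_sub, mem_activeSet.1 k.2]; linarith [hz k k.2]) (hjw k)
  rw [dotProduct_sub] at hdecomp
  linarith [dotProduct_lt_of_notMem_activeSet hy.1 hj]

theorem disjoint_symmetricCone
    (hapex : ApexesInPolyhedron D d)
    {y' : n → ℝ} (hy : y ∈ (polyhedron D d).extremePoints ℝ)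
    (hy' : y' ∈ (polyhedron D d).extremePoints ℝ)
    (hcard' : (activeSet D d y').card = Fintype.card n) (hne : y ≠ y') :
    Disjoint (symmetricCone D d y) (symmetricCone D d y') := by
  obtain ⟨i, hi, hi'⟩ := Finset.not_subset.1 (mt (eq_of_activeSet_subset hy) hne)
  exact Set.disjoint_left.2 fun z hz hz' =>
    (dotProduct_lt_of_mem_symmetricCone hapex hy' hcard' hi' hz').not_ge (hz i hi)

theorem polyhedron_subset_convexHull {κ : Type*} [Finite κ]
    (hbdd : Bornology.IsBounded (polyhedron D d)) (v : κ → n → ℝ)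
    (hv : range v = (polyhedron D d).extremePoints ℝ) (z : κ → n → ℝ)
    (hz : ∀ k, z k ∈ symmetricCone D d (v k)) : polyhedron D d ⊆ convexHull ℝ (range z) := by
  have hP : polyhedron D d = convexHull ℝ (range v) := hv ▸
    (Metric.isCompact_of_isClosed_isBounded isClosed_polyhedron hbdd).eq_convexHull_extremePoints
      convex_polyhedron (hv ▸ finite_range v)
  intro y hy
  by_contra hyz
  obtain ⟨f, u, hfz, hfy⟩ := geometric_hahn_banach_closed_point (convex_convexHull ℝ _)
    ((finite_range z).isClosed_convexHull (𝕜 := ℝ)) hyz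
  have : Nonempty κ := range_nonempty_iff_nonempty.1 (convexHull_nonempty_iff.1 ⟨y, hP ▸ hy⟩)
  obtain ⟨k, hk⟩ := Finite.exists_max (f ∘ v)
  have hmax : IsMaxOn f (polyhedron D d) (v k) := fun x hx => by
    rw [hP] at hx
    obtain ⟨_, ⟨k', rfl⟩, hk'⟩ :=
      (f.toLinearMap.convexOn convex_univ).exists_ge_of_mem_convexHull (subset_univ _) hx
    exact hk'.trans (hk k')
  have hvk : v k ∈ polyhedron D d := hP ▸ subset_convexHull ℝ _ (mem_range_self k)
  have hkz : f (v k) ≤ f (z k) := map_le_of_isMaxOn_polyhedron f.toLinearMap hvk hmax (hz k)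
  have hyk : f y ≤ f (v k) := hmax hy
  have hzu : f (z k) < u := hfz (z k) (subset_convexHull ℝ _ (mem_range_self k))
  linarith

end Polyhedron

theorem stmt_15_general
    (m p : ℕ)
    (D : Matrix (Fin p) (Fin m) ℝ) (d : Fin p → ℝ)
    (Y : Set (Fin m → ℝ)) (hYdef : Y = {y | D.mulVec y ≤ d})
    -- (a) no redundant inequality, Y bounded with nonempty interior
    (hYbd : Bornology.IsBounded Y)
    -- (b) each subsystem of m independent rows has its apex at an extreme point of Y
    (hb : ∀ I : Finset (Fin p), I.card = m →
      LinearIndependent ℝ (fun i : {i : Fin p // i ∈ I} => D i.1) →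
      ∃ y₀ : Fin m → ℝ, (∀ i ∈ I, D i ⬝ᵥ y₀ = d i) ∧ y₀ ∈ Set.extremePoints ℝ Y)
    -- (c) exactly m facet hyperplanes pass through each extreme point of Y
    (hc : ∀ y ∈ Set.extremePoints ℝ Y,
      (Finset.univ.filter (fun i => D i ⬝ᵥ y = d i)).card = m)
    -- enumeration of the extreme points of Y
    (N : ℕ) (yext : Fin N → (Fin m → ℝ))
    (hyinj : Function.Injective yext)
    (hyrange : Set.range yext = Set.extremePoints ℝ Y)
    (Iset : Fin N → Finset (Fin p))
    (hIset : ∀ r, Iset r = Finset.univ.filter (fun i => D i ⬝ᵥ yext r = d i))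
    (Yplus : Fin N → Set (Fin m → ℝ))
    (hYplus : ∀ r, Yplus r = {y | ∀ i ∈ Iset r, d i ≤ D i ⬝ᵥ y}) :
    (∀ r k : Fin N, r ≠ k → Yplus r ∩ Yplus k = ∅) ∧
    (∀ zpt : Fin N → (Fin m → ℝ), (∀ r, zpt r ∈ Yplus r) →
      Y ⊆ convexHull ℝ (Set.range zpt)) := by
  subst hYdef
  have hext (r : Fin N) : yext r ∈ (polyhedron D d).extremePoints ℝ := hyrange ▸ mem_range_self r
  have hcone (r : Fin N) : Yplus r = symmetricCone D d (yext r) := by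
    rw [hYplus, hIset]
    rfl
  have hapex : ApexesInPolyhedron D d := fun I hI hindep => by
    obtain ⟨y₀, hy₀, hext₀⟩ := hb I (by simpa using hI) hindep
    exact ⟨y₀, hext₀.1, hy₀⟩
  refine ⟨fun r k hrk => ?_, fun z hz => ?_⟩
  · rw [hcone, hcone, ← disjoint_iff_inter_eq_empty]
    exact disjoint_symmetricCone hapex (hext r) (hext k) (by simpa [activeSet] using hc _ (hext k))
      (hyinj.ne hrk)
  · exact polyhedron_subset_convexHull hYbd yext hyrange z fun r => hcone r ▸ hz r

/-- Lemma 4 of the paper: the symmetric cones at distinct extreme points of a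
perfect polytope are disjoint, and any selection of points from these cones has `Y` inside
its convex hull. -/
theorem stmt_15
    (m p : ℕ) (hm : 0 < m) (hmp : m < p)
    (D : Matrix (Fin p) (Fin m) ℝ) (d : Fin p → ℝ)
    (hrank : D.rank = m)
    (Y : Set (Fin m → ℝ)) (hYdef : Y = {y | D.mulVec y ≤ d})
    -- (a) no redundant inequality, Y bounded with nonempty interior
    (hnored : ∀ i₀ : Fin p,
      ¬ ∀ y : Fin m → ℝ, (∀ i, i ≠ i₀ → D i ⬝ᵥ y ≤ d i) → D i₀ ⬝ᵥ y ≤ d i₀)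
    (hYbd : Bornology.IsBounded Y) (hYint : (interior Y).Nonempty)
    -- (b) each subsystem of m independent rows has its apex at an extreme point of Y
    (hb : ∀ I : Finset (Fin p), I.card = m →
      LinearIndependent ℝ (fun i : {i : Fin p // i ∈ I} => D i.1) →
      ∃ y₀ : Fin m → ℝ, (∀ i ∈ I, D i ⬝ᵥ y₀ = d i) ∧ y₀ ∈ Set.extremePoints ℝ Y)
    -- (c) exactly m facet hyperplanes pass through each extreme point of Y
    (hc : ∀ y ∈ Set.extremePoints ℝ Y,
      (Finset.univ.filter (fun i => D i ⬝ᵥ y = d i)).card = m)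
    -- enumeration of the extreme points of Y
    (N : ℕ) (yext : Fin N → (Fin m → ℝ))
    (hyinj : Function.Injective yext)
    (hyrange : Set.range yext = Set.extremePoints ℝ Y)
    (Iset : Fin N → Finset (Fin p))
    (hIset : ∀ r, Iset r = Finset.univ.filter (fun i => D i ⬝ᵥ yext r = d i))
    (Yplus : Fin N → Set (Fin m → ℝ))
    (hYplus : ∀ r, Yplus r = {y | ∀ i ∈ Iset r, d i ≤ D i ⬝ᵥ y}) :
    (∀ r k : Fin N, r ≠ k → Yplus r ∩ Yplus k = ∅) ∧
    (∀ zpt : Fin N → (Fin m → ℝ), (∀ r, zpt r ∈ Yplus r) →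
      Y ⊆ convexHull ℝ (Set.range zpt)) :=
  stmt_15_general m p D d Y hYdef hYbd hb hc N yext hyinj hyrange Iset hIset Yplus hYplus
end

section
/- Assume the system S is consistent and fix i₀ ∈ {k, …, r}. The function z(α) = Σ_{j=r+1}^{r+s−1} w_{i₀,j} α_j − w_{i₀,0} is bounded above on the set of solutions of S if and only if the following system has no solution in nonnegative variables α_{r+1}, …, α_{r+s}: Σ_{j=r+1}^{r+s−1} w_{i,j} α_j ≤ 0 for i = 1, …, k−1; Σ_{j=r+1}^{r+s−1} w_{i,j} α_j + w_{i,r+s} α_{r+s} ≤ 0 for i = k, …, r; and Σ_{j=r+1}^{r+s−1} w_{i₀,j} α_j = 1. If this system has a solution, then z is unbounded above on the set of solutions of S. -/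
/-!
With the slack variables `α₁, …, α_r`, the system `S` is a linear program in equality form
`{x ≥ 0 | B x = w₀}` and `z` is a linear functional `c` (up to a constant). A solution of the
homogeneous system is a ray `d ≥ 0`, `B d = 0`, `c d = 1`, and along `x₀ + τ d` the value of `z`
grows without bound. Conversely, if there is no such ray, then `(0, -1)` lies outside the cone
`{(B t, -c t) | t ≥ 0}`. This finitely generated cone is closed (by the conic Carathéodory
argument it is a finite union of injective images of orthants), so Farkas' lemma gives a
functional `φ ≥ 0` on it with `φ (0, 1) > 0`, and then `c x ≤ φ (w₀, 0) / φ (0, 1)` on the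
feasible set.
-/

open Set

section OrthantFace

variable {ι F : Type*}

def orthantFace (S : Finset ι) : Set (ι → ℝ) := {t | 0 ≤ t ∧ ∀ i ∉ S, t i = 0}

theorem orthantFace_mono {S T : Finset ι} (h : S ⊆ T) : orthantFace S ⊆ orthantFace T :=
  fun _ ht => ⟨ht.1, fun i hi => ht.2 i fun hiS => hi (h hiS)⟩

theorem isClosed_orthantFace (S : Finset ι) : IsClosed (orthantFace S) := by
  simp only [orthantFace, ofPred_and, ofPred_forall]
  exact (isClosed_le continuous_const continuous_id).inter <|
    isClosed_iInter fun i => isClosed_iInter fun _ =>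
      isClosed_eq (continuous_apply i) continuous_const

variable [Fintype ι]

theorem orthantFace_univ : orthantFace (Finset.univ : Finset ι) = Ici 0 := by
  simp [orthantFace, Ici]

variable [AddCommGroup F] [Module ℝ F]

/-- Move from `t` along the kernel direction `-g` until a coordinate hits zero. -/
theorem exists_mem_orthantFace_erase [DecidableEq ι] (f : (ι → ℝ) →ₗ[ℝ] F) {S : Finset ι}
    {g : ι → ℝ} (hgS : ∀ i ∉ S, g i = 0) (hfg : f g = 0) {i₁ : ι} (hi₁ : 0 < g i₁) {t : ι → ℝ}
    (ht : t ∈ orthantFace S) : ∃ j ∈ S, ∃ t' ∈ orthantFace (S.erase j), f t' = f t := by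
  obtain ⟨j, hj, hmin⟩ :=
    (Finset.univ.filter fun i => 0 < g i).exists_min_image (fun i => t i / g i)
      ⟨i₁, by simpa using hi₁⟩
  simp only [Finset.mem_filter, Finset.mem_univ, true_and] at hj hmin
  have hμ : 0 ≤ t j / g j := div_nonneg (ht.1 j) hj.le
  refine ⟨j, by_contra fun h => hj.ne' (hgS j h), t - (t j / g j) • g,
    ⟨fun i => ?_, fun i hi => ?_⟩, by simp [hfg]⟩
  · simp only [Pi.sub_apply, Pi.smul_apply, smul_eq_mul, Pi.zero_apply, sub_nonneg]
    rcases lt_or_ge 0 (g i) with h | h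
    · exact (le_div_iff₀ h).1 (hmin i h)
    · exact (mul_nonpos_of_nonneg_of_nonpos hμ h).trans (ht.1 i)
  · rw [Finset.mem_erase, not_and_or, not_not] at hi
    rcases hi with rfl | hi
    · simp [hj.ne']
    · simp [ht.2 i hi, hgS i hi]

variable [TopologicalSpace F] [IsTopologicalAddGroup F] [ContinuousSMul ℝ F] [T2Space F]

theorem isClosed_image_orthantFace_of_injective (f : (ι → ℝ) →ₗ[ℝ] F) {S : Finset ι}
    (hf : ∀ g : ι → ℝ, (∀ i ∉ S, g i = 0) → f g = 0 → g = 0) :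
    IsClosed (f '' orthantFace S) := by
  let V : Submodule ℝ (ι → ℝ) := Submodule.pi (↑S)ᶜ fun _ => ⊥
  have hV : orthantFace S ⊆ V := fun t ht i hi => ht.2 i hi
  have hemb : Topology.IsClosedEmbedding (f.domRestrict V) :=
    LinearMap.isClosedEmbedding_of_injective <| LinearMap.ker_eq_bot'.2 fun g hg =>
      Subtype.ext <| hf g (fun i hi => g.2 i hi) hg
  rw [← image_preimage_eq_of_subset (f := ((↑) : V → ι → ℝ)) (s := orthantFace S)
    (by simpa using hV), Set.image_image]
  exact hemb.isClosedMap _ ((isClosed_orthantFace S).preimage continuous_subtype_val)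

theorem isClosed_image_orthantFace [DecidableEq ι] (f : (ι → ℝ) →ₗ[ℝ] F) (S : Finset ι) :
    IsClosed (f '' orthantFace S) := by
  induction S using Finset.strongInduction with
  | H S ih =>
  by_cases hf : ∀ g : ι → ℝ, (∀ i ∉ S, g i = 0) → f g = 0 → g = 0
  · exact isClosed_image_orthantFace_of_injective f hf
  obtain ⟨g, hgS, hfg, i₁, hi₁⟩ : ∃ g : ι → ℝ, (∀ i ∉ S, g i = 0) ∧ f g = 0 ∧ ∃ i, 0 < g i := by
    push Not at hf
    obtain ⟨g, hgS, hfg, hg⟩ := hf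
    obtain ⟨i, hi⟩ := Function.ne_iff.1 hg
    rcases hi.lt_or_gt with h | h
    · exact ⟨-g, fun i hi => by simp [hgS i hi], by simp [hfg], i, by simpa using h⟩
    · exact ⟨g, hgS, hfg, i, h⟩
  have hcover : f '' orthantFace S = ⋃ j ∈ S, f '' orthantFace (S.erase j) := by
    refine Subset.antisymm ?_
      (iUnion₂_subset fun j _ => image_mono (orthantFace_mono (S.erase_subset j)))
    rintro _ ⟨t, ht, rfl⟩
    obtain ⟨j, hj, t', ht', hft⟩ := exists_mem_orthantFace_erase f hgS hfg hi₁ ht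
    exact mem_biUnion hj ⟨t', ht', hft⟩
  rw [hcover]
  exact isClosed_biUnion_finset fun j hj => ih _ (S.erase_ssubset hj)

theorem LinearMap.isClosed_image_nonneg_s19 (f : (ι → ℝ) →ₗ[ℝ] F) : IsClosed (f '' Ici 0) := by
  classical exact orthantFace_univ (ι := ι) ▸ isClosed_image_orthantFace f Finset.univ

theorem exists_strongDual_of_notMem_image_nonneg [LocallyConvexSpace ℝ F]
    (f : (ι → ℝ) →ₗ[ℝ] F) {b : F} (hb : b ∉ f '' Ici 0) :
    ∃ φ : StrongDual ℝ F, (∀ t ∈ Ici 0, 0 ≤ φ (f t)) ∧ φ b < 0 := by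
  let C : ProperCone ℝ F :=
    ⟨(PointedCone.positive ℝ (ι → ℝ)).map f, by simpa using f.isClosed_image_nonneg_s19⟩
  obtain ⟨φ, hφ, hφb⟩ := C.hyperplane_separation_point (x₀ := b) (by simpa [C] using hb)
  exact ⟨φ, fun t ht => hφ _ ⟨t, ht, rfl⟩, hφb⟩

end OrthantFace

section LinearProgram

variable {E F : Type*} [AddCommGroup E] [PartialOrder E] [IsOrderedAddMonoid E] [Module ℝ E]
  [PosSMulMono ℝ E] [AddCommGroup F] [Module ℝ F]

theorem not_bddAbove_image_of_exists_ray (B : E →ₗ[ℝ] F) (c : E →ₗ[ℝ] ℝ) {b : F}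
    (hP : ∃ x, 0 ≤ x ∧ B x = b) (hray : ∃ d, 0 ≤ d ∧ B d = 0 ∧ c d = 1) :
    ¬BddAbove (c '' {x | 0 ≤ x ∧ B x = b}) := by
  obtain ⟨x₀, hx₀, hBx₀⟩ := hP
  obtain ⟨d, hd, hBd, hcd⟩ := hray
  refine not_bddAbove_iff.2 fun M => ?_
  have hτ : 0 ≤ |M - c x₀| + 1 := by positivity
  refine ⟨_, ⟨x₀ + (|M - c x₀| + 1) • d, ⟨add_nonneg hx₀ (smul_nonneg hτ hd), ?_⟩, rfl⟩, ?_⟩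
  · simp [hBx₀, hBd]
  · simp only [map_add, map_smul, hcd, smul_eq_mul, mul_one]
    linarith [le_abs_self (M - c x₀)]

variable {ι : Type*} [Fintype ι] [TopologicalSpace F] [IsTopologicalAddGroup F]
  [ContinuousSMul ℝ F] [T2Space F] [LocallyConvexSpace ℝ F]

theorem bddAbove_image_of_not_exists_ray (B : (ι → ℝ) →ₗ[ℝ] F) (c : (ι → ℝ) →ₗ[ℝ] ℝ) (b : F)
    (hray : ¬∃ d, 0 ≤ d ∧ B d = 0 ∧ c d = 1) : BddAbove (c '' {x | 0 ≤ x ∧ B x = b}) := by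
  have hnot : ((0 : F), (-1 : ℝ)) ∉ B.prod (-c) '' Ici 0 := by
    rintro ⟨d, hd, hBd⟩
    simp only [LinearMap.prod_apply, Function.prod, LinearMap.neg_apply, Prod.mk.injEq,
      neg_inj] at hBd
    exact hray ⟨d, hd, hBd⟩
  obtain ⟨φ, hφ, hφ0⟩ := exists_strongDual_of_notMem_image_nonneg _ hnot
  have hpos : 0 < φ (0, 1) := by
    have : ((0 : F), (-1 : ℝ)) = -(0, 1) := by simp
    rw [this, map_neg] at hφ0
    linarith
  refine ⟨φ (b, 0) / φ (0, 1), ?_⟩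
  rintro _ ⟨x, ⟨hx, hBx⟩, rfl⟩
  have hLx : B.prod (-c) x = (b, 0) - c x • (0, 1) := by ext <;> simp [hBx]
  have := hφ x hx
  rw [hLx, map_sub, map_smul, smul_eq_mul] at this
  rw [le_div_iff₀ hpos]
  linarith

theorem bddAbove_image_iff_not_exists_ray (B : (ι → ℝ) →ₗ[ℝ] F) (c : (ι → ℝ) →ₗ[ℝ] ℝ) {b : F}
    (hP : ∃ x, 0 ≤ x ∧ B x = b) :
    BddAbove (c '' {x | 0 ≤ x ∧ B x = b}) ↔ ¬∃ d, 0 ≤ d ∧ B d = 0 ∧ c d = 1 :=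
  ⟨fun h hray => not_bddAbove_image_of_exists_ray B c hP hray h,
    bddAbove_image_of_not_exists_ray B c b⟩

end LinearProgram

section System

variable {r q : ℕ}

/-- The variables `(α, β, γ)` of the system `S`, with `β` standing for `α_{r+1}, …, α_{r+s-1}`
and `γ` for `α_{r+s}`. -/
def systemVec (α : Fin r → ℝ) (β : Fin q → ℝ) (γ : ℝ) : Fin r ⊕ Fin q ⊕ Unit → ℝ :=
  Sum.elim α (Sum.elim β fun _ => γ)

def systemMap (w : Fin r → Fin q → ℝ) (wlast : Fin r → ℝ) :
    (Fin r ⊕ Fin q ⊕ Unit → ℝ) →ₗ[ℝ] Fin r → ℝ :=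
  LinearMap.pi fun i => LinearMap.proj (Sum.inl i) +
    ∑ j, w i j • LinearMap.proj (Sum.inr (Sum.inl j)) +
    wlast i • LinearMap.proj (Sum.inr (Sum.inr ()))

def objectiveMap (v : Fin q → ℝ) : (Fin r ⊕ Fin q ⊕ Unit → ℝ) →ₗ[ℝ] ℝ :=
  ∑ j, v j • LinearMap.proj (Sum.inr (Sum.inl j))

theorem exists_systemVec_eq (x : Fin r ⊕ Fin q ⊕ Unit → ℝ) : ∃ α β γ, systemVec α β γ = x :=
  ⟨_, _, x (Sum.inr (Sum.inr ())), by ext (_ | _ | _) <;> rfl⟩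

theorem systemVec_nonneg_iff {α : Fin r → ℝ} {β : Fin q → ℝ} {γ : ℝ} :
    0 ≤ systemVec α β γ ↔ 0 ≤ α ∧ 0 ≤ β ∧ 0 ≤ γ := by
  simp [systemVec, Pi.le_def]

theorem systemMap_systemVec (w : Fin r → Fin q → ℝ) (wlast : Fin r → ℝ) (α : Fin r → ℝ)
    (β : Fin q → ℝ) (γ : ℝ) (i : Fin r) :
    systemMap w wlast (systemVec α β γ) i = α i + ∑ j, w i j * β j + wlast i * γ := by
  simp [systemMap, systemVec]

theorem objectiveMap_systemVec (v : Fin q → ℝ) (α : Fin r → ℝ) (β : Fin q → ℝ) (γ : ℝ) :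
    objectiveMap v (systemVec α β γ) = ∑ j, v j * β j := by
  simp [objectiveMap, systemVec]

theorem systemMap_exists_ray_iff {k : ℕ} {w : Fin r → Fin q → ℝ} {wlast : Fin r → ℝ}
    (hsmall : ∀ i : Fin r, (i : ℕ) + 1 < k → wlast i = 0) (v : Fin q → ℝ) :
    (∃ (β : Fin q → ℝ) (γ : ℝ), 0 ≤ β ∧ 0 ≤ γ ∧
        (∀ i : Fin r, (i : ℕ) + 1 < k → (∑ j, w i j * β j) ≤ 0) ∧
        (∀ i : Fin r, k ≤ (i : ℕ) + 1 → (∑ j, w i j * β j) + wlast i * γ ≤ 0) ∧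
        (∑ j, v j * β j) = 1) ↔
      ∃ d, 0 ≤ d ∧ systemMap w wlast d = 0 ∧ objectiveMap v d = 1 := by
  constructor
  · rintro ⟨β, γ, hβ, hγ, hlt, hge, hv⟩
    have hrow (i : Fin r) : ∑ j, w i j * β j + wlast i * γ ≤ 0 :=
      (lt_or_ge ((i : ℕ) + 1) k).elim (fun h => by simpa [hsmall i h] using hlt i h) (hge i)
    refine ⟨systemVec (fun i => -(∑ j, w i j * β j + wlast i * γ)) β γ,
      systemVec_nonneg_iff.2 ⟨fun i => neg_nonneg.2 (hrow i), hβ, hγ⟩, ?_,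
      by rw [objectiveMap_systemVec, hv]⟩
    ext i
    rw [systemMap_systemVec, Pi.zero_apply]
    ring
  · rintro ⟨d, hd, hBd, hv⟩
    obtain ⟨α, β, γ, rfl⟩ := exists_systemVec_eq d
    obtain ⟨hα, hβ, hγ⟩ := systemVec_nonneg_iff.1 hd
    have hrow (i : Fin r) : ∑ j, w i j * β j + wlast i * γ ≤ 0 := by
      have := congrFun hBd i
      rw [systemMap_systemVec] at this
      linarith [hα i]
    exact ⟨β, γ, hβ, hγ, fun i hi => by simpa [hsmall i hi] using hrow i, fun i _ => hrow i,
      by rwa [objectiveMap_systemVec] at hv⟩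

end System

theorem stmt_19_general
    (r s k : ℕ)
    (w0 : Fin r → ℝ) (w : Fin r → Fin (s - 1) → ℝ) (wlast : Fin r → ℝ)
    (hsmall : ∀ i : Fin r, (i : ℕ) + 1 < k → 0 ≤ w0 i ∧ wlast i = 0)
    (Feas : (Fin r → ℝ) → (Fin (s - 1) → ℝ) → ℝ → Prop)
    (hFeas : ∀ (α : Fin r → ℝ) (β : Fin (s - 1) → ℝ) (γ : ℝ), Feas α β γ ↔
      (0 ≤ α ∧ 0 ≤ β ∧ 0 ≤ γ ∧
        ∀ i : Fin r, α i + (∑ j, w i j * β j) + wlast i * γ = w0 i))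
    (hconsistent : ∃ α β γ, Feas α β γ)
    (i₀ : Fin r) :
    (BddAbove {v : ℝ | ∃ α β γ, Feas α β γ ∧ v = (∑ j, w i₀ j * β j) - w0 i₀} ↔
      ¬ ∃ (β : Fin (s - 1) → ℝ) (γ : ℝ), 0 ≤ β ∧ 0 ≤ γ ∧
        (∀ i : Fin r, (i : ℕ) + 1 < k → (∑ j, w i j * β j) ≤ 0) ∧
        (∀ i : Fin r, k ≤ (i : ℕ) + 1 → (∑ j, w i j * β j) + wlast i * γ ≤ 0) ∧
        (∑ j, w i₀ j * β j) = 1) ∧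
    ((∃ (β : Fin (s - 1) → ℝ) (γ : ℝ), 0 ≤ β ∧ 0 ≤ γ ∧
        (∀ i : Fin r, (i : ℕ) + 1 < k → (∑ j, w i j * β j) ≤ 0) ∧
        (∀ i : Fin r, k ≤ (i : ℕ) + 1 → (∑ j, w i j * β j) + wlast i * γ ≤ 0) ∧
        (∑ j, w i₀ j * β j) = 1) →
      ∀ M : ℝ, ∃ α β γ, Feas α β γ ∧ M < (∑ j, w i₀ j * β j) - w0 i₀) := by
  set P := {x | 0 ≤ x ∧ systemMap w wlast x = w0}
  have hmem (α β γ) : Feas α β γ ↔ systemVec α β γ ∈ P := by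
    simp only [hFeas, P, mem_ofPred_eq, systemVec_nonneg_iff, funext_iff, systemMap_systemVec,
      and_assoc]
  have hZ : {v : ℝ | ∃ α β γ, Feas α β γ ∧ v = (∑ j, w i₀ j * β j) - w0 i₀} =
      OrderIso.addRight (-w0 i₀) '' (objectiveMap (w i₀) '' P) := by
    ext v
    simp only [mem_ofPred_eq, image_image, mem_image, OrderIso.addRight_apply, ← sub_eq_add_neg]
    constructor
    · rintro ⟨α, β, γ, hF, rfl⟩
      exact ⟨_, (hmem α β γ).1 hF, by rw [objectiveMap_systemVec]⟩
    · rintro ⟨x, hx, rfl⟩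
      obtain ⟨α, β, γ, rfl⟩ := exists_systemVec_eq x
      exact ⟨α, β, γ, (hmem α β γ).2 hx, by rw [objectiveMap_systemVec]⟩
  have hP : ∃ x, 0 ≤ x ∧ systemMap w wlast x = w0 := by
    obtain ⟨α, β, γ, hF⟩ := hconsistent
    exact ⟨_, (hmem α β γ).1 hF⟩
  have key := (OrderIso.addRight (-w0 i₀)).bddAbove_image.trans
    (bddAbove_image_iff_not_exists_ray _ (objectiveMap (w i₀)) hP)
  rw [← hZ, ← systemMap_exists_ray_iff (fun i hi => (hsmall i hi).2)] at key
  refine ⟨key, fun hray M => ?_⟩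
  obtain ⟨_, ⟨α, β, γ, hF, rfl⟩, hM⟩ := not_bddAbove_iff.1 (fun h => key.1 h hray) M
  exact ⟨α, β, γ, hF, hM⟩

/-- Lemma 9 of the paper: boundedness criterion for the linear function
`z_{i₀}` on the solution set of the system (blinn21). -/
theorem stmt_19
    (r s k : ℕ) (hr : 0 < r) (hs : 2 ≤ s) (hk1 : 1 ≤ k) (hkr : k ≤ r)
    (w0 : Fin r → ℝ) (w : Fin r → Fin (s - 1) → ℝ) (wlast : Fin r → ℝ)
    (hsmall : ∀ i : Fin r, (i : ℕ) + 1 < k → 0 ≤ w0 i ∧ wlast i = 0)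
    (hbig : ∀ i : Fin r, k ≤ (i : ℕ) + 1 → 0 < w0 i ∧ wlast i < 0)
    (Feas : (Fin r → ℝ) → (Fin (s - 1) → ℝ) → ℝ → Prop)
    (hFeas : ∀ (α : Fin r → ℝ) (β : Fin (s - 1) → ℝ) (γ : ℝ), Feas α β γ ↔
      (0 ≤ α ∧ 0 ≤ β ∧ 0 ≤ γ ∧
        ∀ i : Fin r, α i + (∑ j, w i j * β j) + wlast i * γ = w0 i))
    (hconsistent : ∃ α β γ, Feas α β γ)
    (i₀ : Fin r) (hi₀ : k ≤ (i₀ : ℕ) + 1) :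
    (BddAbove {v : ℝ | ∃ α β γ, Feas α β γ ∧ v = (∑ j, w i₀ j * β j) - w0 i₀} ↔
      ¬ ∃ (β : Fin (s - 1) → ℝ) (γ : ℝ), 0 ≤ β ∧ 0 ≤ γ ∧
        (∀ i : Fin r, (i : ℕ) + 1 < k → (∑ j, w i j * β j) ≤ 0) ∧
        (∀ i : Fin r, k ≤ (i : ℕ) + 1 → (∑ j, w i j * β j) + wlast i * γ ≤ 0) ∧
        (∑ j, w i₀ j * β j) = 1) ∧
    ((∃ (β : Fin (s - 1) → ℝ) (γ : ℝ), 0 ≤ β ∧ 0 ≤ γ ∧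
        (∀ i : Fin r, (i : ℕ) + 1 < k → (∑ j, w i j * β j) ≤ 0) ∧
        (∀ i : Fin r, k ≤ (i : ℕ) + 1 → (∑ j, w i j * β j) + wlast i * γ ≤ 0) ∧
        (∑ j, w i₀ j * β j) = 1) →
      ∀ M : ℝ, ∃ α β γ, Feas α β γ ∧ M < (∑ j, w i₀ j * β j) - w0 i₀) :=
  stmt_19_general r s k w0 w wlast hsmall Feas hFeas hconsistent i₀
end
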